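/- arXiv:1611.04559 — 7 statements merged into one kernel-verified Lean document; each statement's English description precedes it below -/
import Mathlib

section
/- Let A = (A_j)_{j∈ℤ} be a real sequence, a_j = 2cos(π A_j), and suppose the set J₀ = {j ∈ ℤ : a_j = 0} is unbounded above and unbounded below. For consecutive elements j < k of J₀ (i.e. no element of J₀ lies strictly between them), let L_{j,k} be the (k−j)×(k−j) real symmetric tridiagonal matrix with zero diagonal and off-diagonal entries a_{j+1}, …, a_{k−1}. Then the spectrum of L_A equals the closure of the union of the spectra of the matrices L_{j,k} over all pairs j < k of consecutive elements of J₀. -/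
/-! Every zero `a_j = 0` cuts the chain: `L_A` does not couple the sites `≤ j` with those `> j`.
So `ℓ²(ℤ)` is the orthogonal sum of the finite blocks `ℓ²((j, k])` over consecutive zeros
`j < k`, and on the block `(j, k]` the operator acts as the matrix `L_{j,k}`.

An eigenvector of `L_{j,k}`, extended by zero, is an eigenvector of `L_A`; as the spectrum is
closed this gives `⊇`. Conversely `L_A` is self-adjoint, so its spectrum is real, and if a real
`t` is at distance `ε > 0` from every eigenvalue of every block, the spectral theorem on each
block gives `‖(t - L_A) φ‖ ≥ ε ‖φ‖` blockwise, hence on all of `ℓ²(ℤ)`. A self-adjoint operator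
that is bounded below is invertible, so `t` is not in the spectrum. -/

open Real Complex

/-- The `(k−j)×(k−j)` real symmetric tridiagonal matrix with zero diagonal and
off-diagonal entries `a_{j+1}, …, a_{k−1}`. -/
noncomputable def blockMatrix (a : ℤ → ℝ) (j k : ℤ) :
    Matrix (Fin (k - j).toNat) (Fin (k - j).toNat) ℝ :=
  fun i i' =>
    if (i' : ℕ) = (i : ℕ) + 1 then a (j + 1 + (i : ℕ))
    else if (i : ℕ) = (i' : ℕ) + 1 then a (j + 1 + (i' : ℕ))
    else 0

/-- The set of (real) eigenvalues of a finite real matrix. -/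
def eigSet {m : ℕ} (M : Matrix (Fin m) (Fin m) ℝ) : Set ℝ :=
  {μ : ℝ | ∃ v : Fin m → ℝ, v ≠ 0 ∧ M.mulVec v = μ • v}

open Finset Matrix WithLp

def ConsecutiveZeros {M : Type*} [Zero M] (a : ℤ → M) (j k : ℤ) : Prop :=
  a j = 0 ∧ a k = 0 ∧ j < k ∧ ∀ i : ℤ, a i = 0 → ¬ (j < i ∧ i < k)

section ConsecutiveZeros

variable {M : Type*} [Zero M] {a : ℤ → M}

theorem exists_consecutiveZeros_mem_Ioc (hAbove : ¬ BddAbove {j : ℤ | a j = 0})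
    (hBelow : ¬ BddBelow {j : ℤ | a j = 0}) (i : ℤ) :
    ∃ j k, ConsecutiveZeros a j k ∧ i ∈ Ioc j k := by
  classical
  obtain ⟨k, ⟨hk, hik⟩, hk_least⟩ := Int.exists_least_of_bdd (P := fun l => a l = 0 ∧ i ≤ l)
    ⟨i, fun _ h => h.2⟩
    (let ⟨l, hl, hil⟩ := not_bddAbove_iff.mp hAbove i; ⟨l, hl, hil.le⟩)
  obtain ⟨j, ⟨hj, hji⟩, hj_greatest⟩ := Int.exists_greatest_of_bdd (P := fun l => a l = 0 ∧ l < i)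
    ⟨i, fun _ h => h.2.le⟩ (not_bddBelow_iff.mp hBelow i)
  refine ⟨j, k, ⟨hj, hk, by omega, fun l hl hjlk => ?_⟩, mem_Ioc.mpr ⟨hji, hik⟩⟩
  rcases lt_or_ge l i with hli | hil
  · exact absurd (hj_greatest l ⟨hl, hli⟩) (by omega)
  · exact absurd (hk_least l ⟨hl, hil⟩) (by omega)

theorem ConsecutiveZeros.eq_of_mem_Ioc {j k j' k' i : ℤ} (h : ConsecutiveZeros a j k)
    (h' : ConsecutiveZeros a j' k') (hi : i ∈ Ioc j k) (hi' : i ∈ Ioc j' k') :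
    (j, k) = (j', k') := by
  obtain ⟨hj, hk, -, hgap⟩ := h
  obtain ⟨hj', hk', -, hgap'⟩ := h'
  rw [mem_Ioc] at hi hi'
  have := hgap j' hj'
  have := hgap k' hk'
  have := hgap' j hj
  have := hgap' k hk
  ext <;> dsimp only <;> omega

theorem exists_partition_Ioc_consecutiveZeros
    (hAbove : ¬ BddAbove {j : ℤ | a j = 0}) (hBelow : ¬ BddBelow {j : ℤ | a j = 0}) :
    ∃ blockOf : ℤ → ℤ × ℤ, ∀ b : ℤ × ℤ,
      blockOf ⁻¹' {b} = ∅ ∨ ConsecutiveZeros a b.1 b.2 ∧ blockOf ⁻¹' {b} = ↑(Ioc b.1 b.2) := by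
  choose j k hjk hmem using exists_consecutiveZeros_mem_Ioc hAbove hBelow
  refine ⟨fun i => (j i, k i), fun b => ?_⟩
  by_cases hb : ConsecutiveZeros a b.1 b.2
  · refine .inr ⟨hb, Set.ext fun i => ⟨?_, fun hi => (hjk i).eq_of_mem_Ioc hb (hmem i) hi⟩⟩
    rintro rfl
    exact hmem i
  · refine .inl (Set.eq_empty_of_forall_notMem fun i hi => hb ?_)
    rw [← Set.mem_singleton_iff.mp hi]
    exact hjk i

end ConsecutiveZeros

def jacobi (a : ℤ → ℝ) (x : ℤ → ℂ) (i : ℤ) : ℂ :=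
  a i * x (i + 1) + a (i - 1) * x (i - 1)

theorem sum_Ioc_eq_sum_fin {β : Type*} [AddCommMonoid β] (j k : ℤ) (f : ℤ → β) :
    ∑ i ∈ Ioc j k, f i = ∑ m : Fin (k - j).toNat, f (j + 1 + m) := by
  rw [Int.Ioc_eq_finset_map, sum_map, ← Fin.sum_univ_eq_sum_range]
  rfl

theorem blockMatrix_map_ofReal_isHermitian (a : ℤ → ℝ) (j k : ℤ) :
    ((blockMatrix a j k).map ((↑) : ℝ → ℂ)).IsHermitian := by
  refine IsHermitian.map ?_ _ fun r => (Complex.conj_ofReal r).symm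
  ext m m'
  simp only [conjTranspose_apply, blockMatrix, star_trivial]
  split_ifs <;> first | rfl | omega

theorem blockMatrix_map_ofReal_mulVec {a : ℤ → ℝ} {j k : ℤ} (hj : a j = 0) (hk : a k = 0)
    (x : ℤ → ℂ) (m : Fin (k - j).toNat) :
    ((blockMatrix a j k).map (↑) *ᵥ fun m' : Fin (k - j).toNat => x (j + 1 + m')) m
      = jacobi a x (j + 1 + m) := by
  set i : ℤ := j + 1 + m
  have hi : j < i ∧ i ≤ k := by
    have := m.isLt
    omega
  have hterm : ∀ m' : Fin (k - j).toNat, ((blockMatrix a j k).map (↑) m m' : ℂ) * x (j + 1 + m')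
      = (if j + 1 + m' = i + 1 then a i * x (i + 1) else 0)
        + (if j + 1 + m' = i - 1 then a (i - 1) * x (i - 1) else 0) := by
    intro m'
    simp only [map_apply, blockMatrix, i]
    split_ifs <;> first | omega | simp_all
  rw [mulVec, dotProduct, Fintype.sum_congr _ _ hterm, sum_add_distrib,
    ← sum_Ioc_eq_sum_fin j k fun i' => if i' = i + 1 then a i * x (i + 1) else 0,
    ← sum_Ioc_eq_sum_fin j k fun i' => if i' = i - 1 then a (i - 1) * x (i - 1) else 0,
    sum_ite_eq', sum_ite_eq', jacobi]
  -- the couplings leaving the block are `a k` and `a j`, which vanish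
  congr 1 <;> split_ifs with h <;> rw [mem_Ioc] at h
  · rw [show i = k by omega, hk, Complex.ofReal_zero, zero_mul]
  · rw [show i - 1 = j by omega, hj, Complex.ofReal_zero, zero_mul]

section Extension

variable {j k : ℤ}

noncomputable def extendByZero (j k : ℤ) (v : Fin (k - j).toNat → ℂ) (i : ℤ) : ℂ :=
  if h : i ∈ Ioc j k then v ⟨(i - (j + 1)).toNat, by rw [mem_Ioc] at h; omega⟩ else 0

theorem extendByZero_add (v : Fin (k - j).toNat → ℂ) (m : Fin (k - j).toNat) :
    extendByZero j k v (j + 1 + m) = v m := by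
  have := m.isLt
  rw [extendByZero, dif_pos (by rw [mem_Ioc]; omega)]
  congr
  omega

theorem extendByZero_of_notMem (v : Fin (k - j).toNat → ℂ) {i : ℤ} (hi : i ∉ Ioc j k) :
    extendByZero j k v i = 0 :=
  dif_neg hi

theorem jacobi_extendByZero {a : ℤ → ℝ} (hj : a j = 0) (hk : a k = 0) {s : ℂ}
    {v : Fin (k - j).toNat → ℂ} (hv : (blockMatrix a j k).map (↑) *ᵥ v = s • v) :
    jacobi a (extendByZero j k v) = s • extendByZero j k v := by
  ext i
  by_cases hi : i ∈ Ioc j k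
  · obtain ⟨m, rfl⟩ : ∃ m : Fin (k - j).toNat, j + 1 + m = i :=
      ⟨⟨(i - (j + 1)).toNat, by rw [mem_Ioc] at hi; omega⟩, by rw [mem_Ioc] at hi; dsimp only; omega⟩
    rw [← blockMatrix_map_ofReal_mulVec hj hk]
    simp only [extendByZero_add, hv, Pi.smul_apply]
  · rw [mem_Ioc] at hi
    have hnext : a i * extendByZero j k v (i + 1) = 0 := by
      by_cases h : i + 1 ∈ Ioc j k
      · rw [show i = j by rw [mem_Ioc] at h; omega, hj, Complex.ofReal_zero, zero_mul]
      · rw [extendByZero_of_notMem v h, mul_zero]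
    have hprev : a (i - 1) * extendByZero j k v (i - 1) = 0 := by
      by_cases h : i - 1 ∈ Ioc j k
      · rw [show i - 1 = k by rw [mem_Ioc] at h; omega, hk, Complex.ofReal_zero, zero_mul]
      · rw [extendByZero_of_notMem v h, mul_zero]
    rw [jacobi, hnext, hprev, Pi.smul_apply,
      extendByZero_of_notMem v (by rwa [mem_Ioc]), smul_zero, add_zero]

end Extension

theorem LinearMap.IsSymmetric.mul_norm_le_norm_sub_smul {𝕜 E : Type*} [RCLike 𝕜]
    [NormedAddCommGroup E] [InnerProductSpace 𝕜 E] [FiniteDimensional 𝕜 E] {T : E →ₗ[𝕜] E}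
    (hT : T.IsSymmetric) {n : ℕ} (hn : Module.finrank 𝕜 E = n) {t ε : ℝ} (hε : 0 ≤ ε)
    (hgap : ∀ i, ε ≤ |hT.eigenvalues hn i - t|) (x : E) :
    ε * ‖x‖ ≤ ‖T x - (t : 𝕜) • x‖ := by
  set b := hT.eigenvectorBasis hn
  rw [← b.repr.norm_map x, ← b.repr.norm_map]
  refine le_of_sq_le_sq ?_ (norm_nonneg _)
  rw [mul_pow, EuclideanSpace.norm_sq_eq, EuclideanSpace.norm_sq_eq, mul_sum]
  refine sum_le_sum fun i _ => ?_
  rw [map_sub, map_smul, PiLp.sub_apply, PiLp.smul_apply, hT.eigenvectorBasis_apply_self_apply,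
    smul_eq_mul, ← sub_mul, norm_mul, mul_pow, ← RCLike.ofReal_sub, RCLike.norm_ofReal]
  gcongr
  exact hgap i

theorem mem_eigSet_of_mulVec_eq {m : ℕ} {M : Matrix (Fin m) (Fin m) ℝ} {μ : ℝ}
    {v : Fin m → ℂ} (hv : v ≠ 0) (h : M.map (↑) *ᵥ v = (μ : ℂ) • v) : μ ∈ eigSet M := by
  have hre : M *ᵥ (fun i => (v i).re) = μ • fun i => (v i).re := by
    ext i
    simpa [mulVec, dotProduct, Complex.re_sum] using congrArg Complex.re (congrFun h i)
  have him : M *ᵥ (fun i => (v i).im) = μ • fun i => (v i).im := by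
    ext i
    simpa [mulVec, dotProduct, Complex.im_sum] using congrArg Complex.im (congrFun h i)
  by_cases hv_re : (fun i => (v i).re) = 0
  · refine ⟨_, fun hv_im => hv ?_, him⟩
    ext i : 1
    exact Complex.ext (congrFun hv_re i) (congrFun hv_im i)
  · exact ⟨_, hv_re, hre⟩

theorem eigenvalues_mem_eigSet {m : ℕ} {M : Matrix (Fin m) (Fin m) ℝ}
    (hT : (toEuclideanLin (M.map ((↑) : ℝ → ℂ))).IsSymmetric) {n : ℕ}
    (hn : Module.finrank ℂ (EuclideanSpace ℂ (Fin m)) = n) (i : Fin n) :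
    hT.eigenvalues hn i ∈ eigSet M :=
  mem_eigSet_of_mulVec_eq (fun h => (hT.eigenvectorBasis hn).orthonormal.ne_zero i
      (congrArg (toLp 2) h))
    (congrArg ofLp (hT.apply_eigenvectorBasis hn i))

theorem sq_mul_sum_Ioc_norm_sq_le {a : ℤ → ℝ} {j k : ℤ} (hj : a j = 0) (hk : a k = 0) {t ε : ℝ}
    (hε : 0 ≤ ε) (hgap : ∀ μ ∈ eigSet (blockMatrix a j k), ε ≤ |t - μ|) (x : ℤ → ℂ) :
    ε ^ 2 * ∑ i ∈ Ioc j k, ‖x i‖ ^ 2 ≤ ∑ i ∈ Ioc j k, ‖(t : ℂ) * x i - jacobi a x i‖ ^ 2 := by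
  have hT := isSymmetric_toEuclideanLin_iff.mpr (blockMatrix_map_ofReal_isHermitian a j k)
  have key := hT.mul_norm_le_norm_sub_smul finrank_euclideanSpace_fin hε
    (fun i => (hgap _ (eigenvalues_mem_eigSet hT _ i)).trans_eq (abs_sub_comm _ _))
    (toLp 2 fun m : Fin (k - j).toNat => x (j + 1 + m))
  have hsq := pow_le_pow_left₀ (by positivity) key 2
  rw [mul_pow, EuclideanSpace.norm_sq_eq, EuclideanSpace.norm_sq_eq] at hsq
  rw [sum_Ioc_eq_sum_fin, sum_Ioc_eq_sum_fin]
  refine hsq.trans_eq (Fintype.sum_congr _ _ fun m => ?_)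
  simp only [toLpLin_apply, ofLp_sub, ofLp_smul, Pi.sub_apply, Pi.smul_apply,
    blockMatrix_map_ofReal_mulVec hj hk, smul_eq_mul, norm_sub_rev]
  rfl

theorem lp.hasSum_norm_sq {α : Type*} {E : α → Type*} [∀ i, NormedAddCommGroup (E i)]
    (f : lp E 2) : HasSum (fun i => ‖f i‖ ^ 2) (‖f‖ ^ 2) := by
  simpa using lp.hasSum_norm (p := 2) (by norm_num) f

theorem lp.mul_norm_sq_le_of_fiberwise {α κ : Type*} {E F : α → Type*}
    [∀ i, NormedAddCommGroup (E i)] [∀ i, NormedAddCommGroup (F i)] (f : lp E 2) (g : lp F 2)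
    (c : ℝ) (p : α → κ)
    (h : ∀ b, c * ∑' i : p ⁻¹' {b}, ‖f i‖ ^ 2 ≤ ∑' i : p ⁻¹' {b}, ‖g i‖ ^ 2) :
    c * ‖f‖ ^ 2 ≤ ‖g‖ ^ 2 :=
  hasSum_le h (((lp.hasSum_norm_sq f).tsum_fiberwise p).mul_left c)
    ((lp.hasSum_norm_sq g).tsum_fiberwise p)

theorem IsSelfAdjoint.isUnit_of_antilipschitz {𝕜 H : Type*} [RCLike 𝕜] [NormedAddCommGroup H]
    [InnerProductSpace 𝕜 H] [CompleteSpace H] {T : H →L[𝕜] H} (hT : IsSelfAdjoint T)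
    {K : NNReal} (hK : AntilipschitzWith K T) : IsUnit T := by
  rw [ContinuousLinearMap.isUnit_iff_bijective,
    ContinuousLinearMap.bijective_iff_dense_range_and_antilipschitz]
  refine ⟨?_, K, hK⟩
  rw [Submodule.topologicalClosure_eq_top_iff, ContinuousLinearMap.orthogonal_range,
    hT.adjoint_eq, LinearMap.ker_eq_bot]
  exact hK.injective

local notation "ℓ²" => lp (fun _ : ℤ => ℂ) 2

open ComplexConjugate

section JacobiOperator

variable {a : ℤ → ℝ} {L : ℓ² →L[ℂ] ℓ²}

theorem abs_le_opNorm_of_jacobi (hL : ∀ φ, ⇑(L φ) = jacobi a φ) (i : ℤ) : |a i| ≤ ‖L‖ := by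
  have h := lp.norm_apply_le_norm two_ne_zero (L (lp.single 2 (i + 1) 1)) i
  rw [hL, jacobi, lp.single_apply_self, lp.single_apply_ne _ _ _ (by omega : i - 1 ≠ i + 1)] at h
  simp only [mul_one, mul_zero, add_zero, Complex.norm_real, Real.norm_eq_abs] at h
  refine h.trans ((L.le_opNorm _).trans_eq ?_)
  rw [lp.norm_single (by norm_num), norm_one, mul_one]

theorem summable_mul_conj_shift {C : ℝ} (hC : ∀ i, |a i| ≤ C) (φ ψ : ℓ²) :
    Summable fun i => (a i : ℂ) * (conj (φ (i + 1)) * ψ i) := by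
  refine .of_norm_bounded (g := fun i => C * (‖φ (i + 1)‖ ^ 2 + ‖ψ i‖ ^ 2)) ?_ fun i => ?_
  · exact (((Equiv.addRight 1).summable_iff.mpr (lp.hasSum_norm_sq φ).summable).add
      (lp.hasSum_norm_sq ψ).summable).mul_left C
  · rw [norm_mul, norm_mul, Complex.norm_real, Real.norm_eq_abs, Complex.norm_conj]
    exact mul_le_mul (hC i) (by nlinarith [sq_nonneg (‖φ (i + 1)‖ - ‖ψ i‖)]) (by positivity)
      ((abs_nonneg _).trans (hC i))

theorem inner_apply_eq_of_jacobi (hL : ∀ φ, ⇑(L φ) = jacobi a φ) (φ ψ : ℓ²) :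
    inner ℂ (L φ) ψ = (∑' i, (a i : ℂ) * (conj (φ (i + 1)) * ψ i))
      + conj (∑' i, (a i : ℂ) * (conj (ψ (i + 1)) * φ i)) := by
  have hC := abs_le_opNorm_of_jacobi hL
  have hback : HasSum (fun i => (a (i - 1) : ℂ) * (conj (φ (i - 1)) * ψ i))
      (conj (∑' i, (a i : ℂ) * (conj (ψ (i + 1)) * φ i))) := by
    rw [← (Equiv.addRight 1).hasSum_iff]
    convert (summable_mul_conj_shift hC ψ φ).hasSum.star using 1
    · ext i
      simp [mul_comm]
    · rfl
  rw [lp.inner_eq_tsum, hL]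
  refine ((summable_mul_conj_shift hC φ ψ).hasSum.add hback).tsum_eq ▸ tsum_congr fun i => ?_
  simp only [jacobi, RCLike.inner_apply', map_add, map_mul, Complex.conj_ofReal]
  ring

theorem isSelfAdjoint_of_jacobi (hL : ∀ φ, ⇑(L φ) = jacobi a φ) : IsSelfAdjoint L := by
  rw [ContinuousLinearMap.isSelfAdjoint_iff_isSymmetric]
  intro φ ψ
  change inner ℂ (L φ) ψ = inner ℂ φ (L ψ)
  rw [← inner_conj_symm φ,
    inner_apply_eq_of_jacobi hL, inner_apply_eq_of_jacobi hL, map_add, Complex.conj_conj,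
    add_comm]

theorem mem_spectrum_of_mem_eigSet (hL : ∀ φ, ⇑(L φ) = jacobi a φ) {j k : ℤ} (hj : a j = 0)
    (hk : a k = 0) {s : ℝ} (hs : s ∈ eigSet (blockMatrix a j k)) : (s : ℂ) ∈ spectrum ℂ L := by
  obtain ⟨v, hv0, hv⟩ := hs
  set x := extendByZero j k (Complex.ofReal ∘ v)
  have hx : Memℓp x 2 :=
    (memℓp_zero ((Ioc j k).finite_toSet.subset fun i hi =>
      not_not.mp fun h => hi (extendByZero_of_notMem _ h))).of_exponent_ge bot_le
  set φ : ℓ² := ⟨x, hx⟩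
  have hφ : φ ≠ 0 := by
    obtain ⟨m, hm⟩ := Function.ne_iff.mp hv0
    refine fun h => hm ?_
    simpa [φ, x, extendByZero_add] using congrArg (fun ψ : ℓ² => ψ (j + 1 + m)) h
  have hLφ : L φ = (s : ℂ) • φ := by
    refine lp.ext (hL φ ▸ jacobi_extendByZero hj hk ?_)
    ext m
    have h := RingHom.map_mulVec Complex.ofRealHom (blockMatrix a j k) v m
    simp only [hv, Pi.smul_apply, smul_eq_mul, map_mul] at h
    exact h.symm
  rw [spectrum.mem_iff, ContinuousLinearMap.isUnit_iff_bijective]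
  exact fun h => hφ (h.1 (by simp [hLφ]))

theorem mul_norm_le_norm_algebraMap_sub_apply (hL : ∀ φ, ⇑(L φ) = jacobi a φ)
    (hAbove : ¬ BddAbove {j : ℤ | a j = 0}) (hBelow : ¬ BddBelow {j : ℤ | a j = 0}) {t ε : ℝ}
    (hε : 0 ≤ ε)
    (hgap : ∀ j k, ConsecutiveZeros a j k → ∀ μ ∈ eigSet (blockMatrix a j k), ε ≤ |t - μ|)
    (φ : ℓ²) : ε * ‖φ‖ ≤ ‖(algebraMap ℂ (ℓ² →L[ℂ] ℓ²) t - L) φ‖ := by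
  have hT : ⇑((algebraMap ℂ (ℓ² →L[ℂ] ℓ²) t - L) φ) = fun i => t * φ i - jacobi a φ i := by
    ext i
    rw [_root_.sub_apply, ContinuousLinearMap.algebraMap_apply, lp.coeFn_sub, lp.coeFn_smul,
      Pi.sub_apply, Pi.smul_apply, hL, smul_eq_mul]
  obtain ⟨blockOf, hblockOf⟩ := exists_partition_Ioc_consecutiveZeros hAbove hBelow
  refine le_of_pow_le_pow_left₀ two_ne_zero (norm_nonneg _) ?_
  rw [mul_pow]
  refine lp.mul_norm_sq_le_of_fiberwise _ _ _ blockOf fun b => ?_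
  rcases hblockOf b with hempty | ⟨hb, hfiber⟩
  · simp [hempty]
  · rw [hfiber, Finset.tsum_subtype' _ fun i => ‖φ i‖ ^ 2,
      Finset.tsum_subtype' _ fun i => ‖(algebraMap ℂ (ℓ² →L[ℂ] ℓ²) t - L) φ i‖ ^ 2, hT]
    exact sq_mul_sum_Ioc_norm_sq_le hb.1 hb.2.1 hε (hgap _ _ hb) φ

theorem ofReal_notMem_spectrum_of_jacobi (hL : ∀ φ, ⇑(L φ) = jacobi a φ)
    (hAbove : ¬ BddAbove {j : ℤ | a j = 0}) (hBelow : ¬ BddBelow {j : ℤ | a j = 0}) {t ε : ℝ}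
    (hε : 0 < ε)
    (hgap : ∀ j k, ConsecutiveZeros a j k → ∀ μ ∈ eigSet (blockMatrix a j k), ε ≤ |t - μ|) :
    (t : ℂ) ∉ spectrum ℂ L := by
  have hsa : IsSelfAdjoint (algebraMap ℂ (ℓ² →L[ℂ] ℓ²) t - L) :=
    (IsSelfAdjoint.algebraMap _ (Complex.conj_ofReal t)).sub (isSelfAdjoint_of_jacobi hL)
  refine not_not.mpr (hsa.isUnit_of_antilipschitz (K := (ε⁻¹).toNNReal) ?_)
  refine ContinuousLinearMap.antilipschitz_of_bound _ fun φ => ?_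
  rw [Real.coe_toNNReal _ (inv_nonneg.mpr hε.le), inv_mul_eq_div, le_div_iff₀ hε, mul_comm]
  exact mul_norm_le_norm_algebraMap_sub_apply hL hAbove hBelow hε.le hgap φ

end JacobiOperator

theorem spectrum_decomposition_blocks_general
    (a : ℤ → ℝ)
    (hAbove : ¬ BddAbove {j : ℤ | a j = 0})
    (hBelow : ¬ BddBelow {j : ℤ | a j = 0})
    (L : lp (fun _ : ℤ => ℂ) 2 →L[ℂ] lp (fun _ : ℤ => ℂ) 2)
    (hL : ∀ (φ : lp (fun _ : ℤ => ℂ) 2) (j : ℤ),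
      L φ j = (a j : ℂ) * φ (j + 1) + (a (j - 1) : ℂ) * φ (j - 1)) :
    spectrum ℂ L = Complex.ofReal ''
      closure (⋃ (j : ℤ) (k : ℤ)
        (_ : a j = 0 ∧ a k = 0 ∧ j < k ∧ ∀ i : ℤ, a i = 0 → ¬ (j < i ∧ i < k)),
        eigSet (blockMatrix a j k)) := by
  have hL' : ∀ φ, ⇑(L φ) = jacobi a φ := fun φ => funext (hL φ)
  apply subset_antisymm
  · intro z hz
    have hz_re : z = (z.re : ℂ) := (isSelfAdjoint_of_jacobi hL').mem_spectrum_eq_re hz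
    refine ⟨z.re, ?_, hz_re.symm⟩
    by_contra hz_cl
    obtain ⟨ε, hε, hball⟩ := Metric.isOpen_iff.mp isClosed_closure.isOpen_compl _ hz_cl
    refine ofReal_notMem_spectrum_of_jacobi hL' hAbove hBelow hε (fun j k hjk μ hμ => ?_)
      (hz_re ▸ hz)
    rw [← Real.dist_eq, dist_comm, ← not_lt, ← Metric.mem_ball]
    exact fun hμ_ball => hball hμ_ball
      (subset_closure (Set.mem_iUnion₂.mpr ⟨j, k, Set.mem_iUnion.mpr ⟨hjk, hμ⟩⟩))
  · rintro _ ⟨t, ht, rfl⟩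
    refine closure_minimal ?_ ((spectrum.isClosed L).preimage Complex.continuous_ofReal) ht
    simp only [Set.iUnion_subset_iff]
    exact fun j k hjk s hs => mem_spectrum_of_mem_eigSet hL' hjk.1 hjk.2.1 hs

/-- If `J₀ = {j : a j = 0}` is unbounded above and below, then the spectrum
of `L_A` is the closure of the union of the spectra of the finite blocks `L_{j,k}` over
consecutive elements `j < k` of `J₀`. -/
theorem spectrum_decomposition_blocks
    (A : ℤ → ℝ) (a : ℤ → ℝ) (ha : ∀ j, a j = 2 * Real.cos (π * A j))
    (hAbove : ¬ BddAbove {j : ℤ | a j = 0})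
    (hBelow : ¬ BddBelow {j : ℤ | a j = 0})
    (L : lp (fun _ : ℤ => ℂ) 2 →L[ℂ] lp (fun _ : ℤ => ℂ) 2)
    (hL : ∀ (φ : lp (fun _ : ℤ => ℂ) 2) (j : ℤ),
      L φ j = (a j : ℂ) * φ (j + 1) + (a (j - 1) : ℂ) * φ (j - 1)) :
    spectrum ℂ L = Complex.ofReal ''
      closure (⋃ (j : ℤ) (k : ℤ)
        (_ : a j = 0 ∧ a k = 0 ∧ j < k ∧ ∀ i : ℤ, a i = 0 → ¬ (j < i ∧ i < k)),
        eigSet (blockMatrix a j k)) :=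
  spectrum_decomposition_blocks_general a hAbove hBelow L hL
end

section
/- Let α = p/q with p ∈ ℤ, q ∈ ℕ, q ≥ 1, gcd(p, q) = 1, and let θ ∈ ℝ be such that αj + θ + 1/2 ∈ ℤ for some j ∈ {0, …, q−1}. Then the spectrum of L_{α,θ} consists of exactly q distinct real numbers, each of which is an eigenvalue of L_{α,θ} whose eigenspace is infinite-dimensional. -/
/-!
The hopping amplitudes `c j = 2 cos (π (α j + θ))` (`hopping α θ j`) satisfy
`c (j + q n) = (-1) ^ (p n) c j`, and by coprimality of `p` and `q` their zeros form exactly one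
residue class `j₀ + q ℤ`. Cutting `ℤ` at these zeros, `L` becomes an orthogonal sum of blocks
`± A`, where `A` is the `q × q` Jacobi matrix with off-diagonal entries
`c (j₀ + 1), …, c (j₀ + q - 1)`, all nonzero. An eigenvector of `A` is determined by its first
entry, so the `q` eigenvalues of the Hermitian matrix `A` are distinct, and conjugation by
`diag ((-1) ^ k)` shows `spec (-A) = spec A`. Hence for `μ ∉ spec A` all blocks of `L - μ` are
invertible, with only two distinct inverses, so `L - μ` is invertible; for `μ ∈ spec A` an
eigenvector of `A` copied into each of the infinitely many blocks with sign `+1` gives an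
infinite-dimensional eigenspace.
-/

open Function Matrix

theorem spectrum.mem_iff_not_isUnit_sub_smul_one {R A : Type*} [CommRing R] [Ring A] [Algebra R A]
    {r : R} {a : A} : r ∈ spectrum R a ↔ ¬IsUnit (a - r • 1) := by
  rw [spectrum.mem_iff, Algebra.algebraMap_eq_smul_one, ← neg_sub, IsUnit.neg_iff]

theorem Matrix.mem_spectrum_iff_exists_mulVec_eq_smul {K n : Type*} [Field K] [Fintype n]
    [DecidableEq n] {A : Matrix n n K} {μ : K} :
    μ ∈ spectrum K A ↔ ∃ v ≠ 0, A *ᵥ v = μ • v := by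
  rw [spectrum.mem_iff_not_isUnit_sub_smul_one, ← mulVec_injective_iff_isUnit,
    ← coe_mulVecLin, injective_iff_map_eq_zero]
  simp [sub_eq_zero, and_comm]

theorem LinearMap.exists_ne_zero_of_not_finiteDimensional_ker {K V W : Type*} [Field K]
    [AddCommGroup V] [Module K V] [AddCommGroup W] [Module K W] {f : V →ₗ[K] W}
    (h : ¬ FiniteDimensional K (LinearMap.ker f)) : ∃ x ≠ 0, f x = 0 := by
  obtain ⟨x, hx, hx₀⟩ := Submodule.exists_mem_ne_zero_of_ne_bot (p := LinearMap.ker f)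
    fun hbot => h (by rw [hbot]; infer_instance)
  exact ⟨x, hx₀, hx⟩

theorem Matrix.IsHermitian.eigenvalues_injective {𝕜 n : Type*} [RCLike 𝕜] [Fintype n]
    [DecidableEq n] {A : Matrix n n 𝕜} (hA : A.IsHermitian) (i₀ : n)
    (h : ∀ (μ : 𝕜) (v : n → 𝕜), A *ᵥ v = μ • v → v i₀ = 0 → v = 0) :
    Injective hA.eigenvalues := by
  intro i j hij
  by_contra hne
  let u : n → n → 𝕜 := fun k => hA.eigenvectorBasis k
  have hu : ∀ k, A *ᵥ u k = (hA.eigenvalues k : 𝕜) • u k := fun k => by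
    rw [hA.mulVec_eigenvectorBasis k]
    funext m
    simp [u, RCLike.real_smul_eq_coe_mul]
  have hli : LinearIndependent 𝕜 u :=
    hA.eigenvectorBasis.orthonormal.linearIndependent.map'
      (WithLp.linearEquiv 2 𝕜 (n → 𝕜)).toLinearMap (LinearEquiv.ker _)
  have hw : u j i₀ • u i - u i i₀ • u j = 0 := by
    refine h (hA.eigenvalues i) _ ?_ ?_
    · rw [mulVec_sub, mulVec_smul, mulVec_smul, hu, hu, hij, smul_sub, smul_comm,
        smul_comm (u i i₀)]
    · simp only [Pi.sub_apply, Pi.smul_apply, smul_eq_mul]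
      ring
  obtain ⟨-, hi₀⟩ := (LinearIndepOn.pair_iff u hne).1 (hli.linearIndepOn _) (u j i₀) (-u i i₀)
    (by rw [neg_smul, ← sub_eq_add_neg, hw])
  exact hli.ne_zero i <| h _ _ (hu i) (neg_eq_zero.1 hi₀)

theorem Fin.sum_ite_intCast_eq {q : ℕ} {M : Type*} [AddCommMonoid M] (m : ℤ) (x : M) :
    ∑ j : Fin q, (if (j : ℤ) = m then x else 0) = if 0 ≤ m ∧ m < q then x else 0 := by
  split_ifs with hm
  · have hiff : ∀ j : Fin q, (j : ℤ) = m ↔ j = ⟨m.toNat, by omega⟩ := fun j => by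
      rw [Fin.ext_iff]; show _ ↔ _ = m.toNat; omega
    simp_rw [hiff, Finset.sum_ite_eq', Finset.mem_univ, if_true]
  · exact Finset.sum_eq_zero fun j _ => if_neg (by omega)

theorem neg_one_zpow_eq_or (R : Type*) [DivisionRing R] (k : ℤ) :
    (-1 : R) ^ k = 1 ∨ (-1 : R) ^ k = -1 :=
  k.even_or_odd.imp Even.neg_one_zpow Odd.neg_one_zpow

theorem infinite_setOf_neg_one_zpow_mul_eq_one (R : Type*) [DivisionRing R] (p : ℤ) :
    {n : ℤ | (-1 : R) ^ (p * n) = 1}.Infinite :=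
  Set.infinite_of_injective_forall_mem (mul_right_injective₀ (two_ne_zero' ℤ)) fun m =>
    Even.neg_one_zpow ⟨p * m, by ring⟩

section BlockDiagonal

variable {𝕜 ι N κ : Type*} [RCLike 𝕜] (e : N × κ ≃ ι)

def blockOf {E : Type*} (f : ι → E) (n : N) : κ → E := fun k => f (e (n, k))

def ofBlocks {E : Type*} (g : N → κ → E) : ι → E := fun i => g (e.symm i).1 (e.symm i).2

@[simp]
theorem blockOf_ofBlocks {E : Type*} (g : N → κ → E) : blockOf e (ofBlocks e g) = g := by
  funext n k
  simp [blockOf, ofBlocks]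

theorem blockOf_injective {E : Type*} : Injective (blockOf e : (ι → E) → N → κ → E) := by
  intro f g h
  funext i
  simpa [blockOf] using congr_fun (congr_fun h (e.symm i).1) (e.symm i).2

variable [Fintype κ]

theorem memℓp_two_iff_summable_sum_blockOf {E : Type*} [NormedAddCommGroup E] {f : ι → E} :
    Memℓp f 2 ↔ Summable fun n => ∑ k, ‖blockOf e f n k‖ ^ 2 := by
  rw [memℓp_gen_iff (by norm_num), ENNReal.toReal_ofNat]
  simp_rw [Real.rpow_two]
  rw [← e.summable_iff, comp_def, summable_prod_of_nonneg fun _ => sq_nonneg _]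
  simp [blockOf, tsum_fintype, Summable.of_finite]

variable [DecidableEq κ]

theorem Matrix.sum_norm_sq_mulVec_le (G : Matrix κ κ 𝕜) (v : κ → 𝕜) :
    ∑ k, ‖(G *ᵥ v) k‖ ^ 2 ≤ ‖toEuclideanCLM (𝕜 := 𝕜) G‖ ^ 2 * ∑ k, ‖v k‖ ^ 2 := by
  simpa [EuclideanSpace.norm_sq_eq, mul_pow] using
    pow_le_pow_left₀ (norm_nonneg _) ((toEuclideanCLM (𝕜 := 𝕜) G).le_opNorm (WithLp.toLp 2 v)) 2

variable {e} {T : lp (fun _ : ι => 𝕜) 2 →L[𝕜] lp (fun _ : ι => 𝕜) 2} {M : N → Matrix κ κ 𝕜}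

theorem bijective_of_blockOf_eq_mulVec (hT : ∀ φ n, blockOf e (T φ) n = M n *ᵥ blockOf e φ n)
    (hM : ∀ n, IsUnit (M n)) (hfin : (Set.range M).Finite) : Bijective T := by
  refine ⟨fun φ ψ h => lp.ext <| blockOf_injective e <| funext fun n => ?_, fun ψ => ?_⟩
  · exact mulVec_injective_iff_isUnit.2 (hM n) (by rw [← hT, ← hT, h])
  -- Finitely many distinct blocks have uniformly bounded inverses, so inverting blockwise stays
  -- in `ℓ²`.
  obtain ⟨C, hC⟩ := (hfin.image fun m : Matrix κ κ 𝕜 => ‖toEuclideanCLM (𝕜 := 𝕜) m⁻¹‖ ^ 2).bddAbove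
  set f := ofBlocks e fun n => (M n)⁻¹ *ᵥ blockOf e ψ n
  have hmem : Memℓp f 2 := by
    refine (memℓp_two_iff_summable_sum_blockOf e).2 <| Summable.of_nonneg_of_le
      (fun n => by positivity) (fun n => ?_)
      (((memℓp_two_iff_summable_sum_blockOf e).1 ψ.2).mul_left C)
    rw [blockOf_ofBlocks]
    exact (sum_norm_sq_mulVec_le _ _).trans <|
      mul_le_mul_of_nonneg_right (hC ⟨M n, ⟨n, rfl⟩, rfl⟩) (by positivity)
  refine ⟨⟨f, hmem⟩, lp.ext <| blockOf_injective e <| funext fun n => ?_⟩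
  rw [hT]
  change M n *ᵥ blockOf e f n = _
  rw [blockOf_ofBlocks, mulVec_mulVec,
    mul_nonsing_inv _ ((M n).isUnit_iff_isUnit_det.1 (hM n)), one_mulVec]

theorem blockOf_sub_smul_one_eq_mulVec (hT : ∀ φ n, blockOf e (T φ) n = M n *ᵥ blockOf e φ n)
    (μ : 𝕜) (φ : lp (fun _ : ι => 𝕜) 2) (n : N) :
    blockOf e ((T - μ • 1) φ) n = (M n - μ • 1) *ᵥ blockOf e φ n := by
  rw [sub_mulVec, smul_mulVec, one_mulVec, ← hT]
  rfl

theorem spectrum_subset_iUnion_of_blockOf_eq_mulVec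
    (hT : ∀ φ n, blockOf e (T φ) n = M n *ᵥ blockOf e φ n) (hfin : (Set.range M).Finite) :
    spectrum 𝕜 T ⊆ ⋃ n, spectrum 𝕜 (M n) := by
  intro μ hμ
  by_contra h
  simp only [Set.mem_iUnion, not_exists, spectrum.mem_iff_not_isUnit_sub_smul_one,
    not_not] at h hμ
  refine hμ <| ContinuousLinearMap.isUnit_iff_bijective.2 <|
    bijective_of_blockOf_eq_mulVec (blockOf_sub_smul_one_eq_mulVec hT μ) h ?_
  exact (hfin.image (· - μ • 1)).subset
    (Set.range_subset_iff.2 fun n => Set.mem_image_of_mem _ ⟨n, rfl⟩)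

theorem not_finiteDimensional_ker_of_blockOf_eq_mulVec [DecidableEq N]
    (hT : ∀ φ n, blockOf e (T φ) n = M n *ᵥ blockOf e φ n) {s : Set N} (hs : s.Infinite)
    {μ : 𝕜} {v : κ → 𝕜} (hv : v ≠ 0) (hMv : ∀ n ∈ s, M n *ᵥ v = μ • v) :
    ¬ FiniteDimensional 𝕜 (LinearMap.ker (T - μ • 1).toLinearMap) := by
  intro hfin
  have hmem : ∀ n, Memℓp (ofBlocks e (Pi.single n v)) 2 := fun n =>
    (memℓp_two_iff_summable_sum_blockOf e).2 <| summable_of_hasFiniteSupport <|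
      (Set.finite_singleton n).subset fun m hm =>
        Set.mem_singleton_iff.2 <| by_contra fun hmn => by simp [hmn] at hm
  let x : N → lp (fun _ : ι => 𝕜) 2 := fun n => ⟨_, hmem n⟩
  have hx : ∀ n ∈ s, x n ∈ LinearMap.ker (T - μ • 1).toLinearMap := fun n hn => by
    rw [LinearMap.mem_ker, ContinuousLinearMap.coe_coe]
    refine lp.ext <| blockOf_injective e <| funext fun m => ?_
    rw [blockOf_sub_smul_one_eq_mulVec hT]
    change (M m - μ • 1) *ᵥ blockOf e (ofBlocks e (Pi.single n v)) m = 0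
    rw [blockOf_ofBlocks]
    by_cases hmn : m = n
    · subst hmn
      simp [sub_mulVec, smul_mulVec, hMv m hn]
    · simp [hmn]
  let B : LinearMap.ker (T - μ • 1).toLinearMap →ₗ[𝕜] N → κ → 𝕜 :=
    (LinearMap.pi fun n => LinearMap.pi fun k => lp.evalₗ _ 2 (e (n, k))).comp (Submodule.subtype _)
  have hB : B ∘ (fun n : s => (⟨x n, hx n n.2⟩ : LinearMap.ker _)) =
      (fun n => Pi.single n v) ∘ Subtype.val :=
    funext fun n => blockOf_ofBlocks e (Pi.single (n : N) v)
  have hli : LinearIndependent 𝕜 fun n : s => (⟨x n, hx n n.2⟩ : LinearMap.ker _) := by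
    refine .of_comp B ?_
    rw [hB]
    exact (Pi.linearIndependent_single_of_ne_zero fun _ => hv).comp _ Subtype.val_injective
  exact hs (Set.finite_coe_iff.1 hli.finite)

theorem not_finiteDimensional_ker_of_blockOf_eq_sign_smul_mulVec [DecidableEq N]
    {A : Matrix κ κ 𝕜} {σ : N → ℝ} (hσ₁ : {n | σ n = 1}.Infinite)
    (hT : ∀ φ n, blockOf e (T φ) n = ((σ n : 𝕜) • A) *ᵥ blockOf e φ n) {μ : 𝕜}
    (hμ : μ ∈ spectrum 𝕜 A) : ¬ FiniteDimensional 𝕜 (LinearMap.ker (T - μ • 1).toLinearMap) := by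
  obtain ⟨v, hv, hAv⟩ := mem_spectrum_iff_exists_mulVec_eq_smul.1 hμ
  exact not_finiteDimensional_ker_of_blockOf_eq_mulVec hT hσ₁ hv fun n hn => by
    rw [show σ n = 1 from hn, RCLike.ofReal_one, one_smul, hAv]

theorem spectrum_eq_of_blockOf_eq_sign_smul_mulVec [DecidableEq N] {A : Matrix κ κ 𝕜}
    {σ : N → ℝ} (hσ : ∀ n, σ n = 1 ∨ σ n = -1) (hσ₁ : {n | σ n = 1}.Infinite)
    (hA : spectrum 𝕜 (-A) = spectrum 𝕜 A)
    (hT : ∀ φ n, blockOf e (T φ) n = ((σ n : 𝕜) • A) *ᵥ blockOf e φ n) :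
    spectrum 𝕜 T = spectrum 𝕜 A := by
  apply subset_antisymm
  · refine (spectrum_subset_iUnion_of_blockOf_eq_mulVec hT ?_).trans
      (Set.iUnion_subset fun n => ?_)
    · exact (Set.toFinite {A, -A}).subset
        (Set.range_subset_iff.2 fun n => by rcases hσ n with h | h <;> simp [h])
    · rcases hσ n with h | h <;> simp [h, hA]
  · intro μ hμ
    obtain ⟨φ, hφ, hTφ⟩ := LinearMap.exists_ne_zero_of_not_finiteDimensional_ker
      (not_finiteDimensional_ker_of_blockOf_eq_sign_smul_mulVec hσ₁ hT hμ)
    exact spectrum.mem_iff_not_isUnit_sub_smul_one.2 fun hu =>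
      hφ ((ContinuousLinearMap.isUnit_iff_bijective.1 hu).1 (hTφ.trans (map_zero _).symm))

end BlockDiagonal

section Jacobi

variable {𝕜 : Type*} [RCLike 𝕜] {q : ℕ}

-- Only `b 0, …, b (q - 2)` enter; indexing `b` by `ℤ` lets the couplings `b (-1)` and `b (q - 1)`
-- leaving the block be named in `jacobiMatrix_mulVec_apply`.
variable (𝕜) in
def jacobiMatrix (q : ℕ) (b : ℤ → ℝ) : Matrix (Fin q) (Fin q) 𝕜 :=
  of fun i j => if (j : ℤ) = i + 1 then (b i : 𝕜) else if (i : ℤ) = j + 1 then (b j : 𝕜) else 0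

theorem jacobiMatrix_isHermitian (b : ℤ → ℝ) : (jacobiMatrix 𝕜 q b).IsHermitian := by
  ext i j
  simp only [jacobiMatrix, conjTranspose_apply, of_apply]
  split_ifs <;> simp
  omega

theorem jacobiMatrix_mulVec_apply (b : ℤ → ℝ) (w : ℤ → 𝕜) (hlo : b (-1) = 0 ∨ w (-1) = 0)
    (hhi : b (q - 1) = 0 ∨ w q = 0) (i : Fin q) :
    (jacobiMatrix 𝕜 q b *ᵥ fun k => w k) i = b i * w (i + 1) + b (i - 1) * w (i - 1) := by
  have hsplit : ∀ j : Fin q, jacobiMatrix 𝕜 q b i j * w j =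
      (if (j : ℤ) = i + 1 then (b i : 𝕜) * w (i + 1) else 0) +
        (if (j : ℤ) = i - 1 then (b (i - 1) : 𝕜) * w (i - 1) else 0) := fun j => by
    simp only [jacobiMatrix, of_apply]
    by_cases h₁ : (j : ℤ) = i + 1
    · rw [if_pos h₁, if_pos h₁, if_neg (by omega), add_zero, h₁]
    by_cases h₂ : (i : ℤ) = j + 1
    · rw [if_neg h₁, if_pos h₂, if_neg h₁, if_pos (by omega), zero_add,
        show (j : ℤ) = i - 1 by omega]
    · rw [if_neg h₁, if_neg h₂, if_neg h₁, if_neg (by omega), zero_mul, add_zero]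
  have hup : (if 0 ≤ (i : ℤ) + 1 ∧ (i : ℤ) + 1 < q then (b i : 𝕜) * w (i + 1) else 0) =
      b i * w (i + 1) := by
    split_ifs with h
    · rfl
    · rw [show (i : ℤ) = q - 1 by omega]
      obtain hhi | hhi := hhi <;> simp [hhi]
  have hdown : (if 0 ≤ (i : ℤ) - 1 ∧ (i : ℤ) - 1 < q then (b (i - 1) : 𝕜) * w (i - 1) else 0) =
      b (i - 1) * w (i - 1) := by
    split_ifs with h
    · rfl
    · rw [show (i : ℤ) = 0 by omega]
      obtain hlo | hlo := hlo <;> simp [hlo]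
  simp only [mulVec, dotProduct, hsplit, Finset.sum_add_distrib, Fin.sum_ite_intCast_eq, hup, hdown]

theorem eq_zero_of_jacobiMatrix_mulVec_eq_smul [NeZero q] {b : ℤ → ℝ}
    (hb : ∀ k : ℕ, k + 1 < q → b k ≠ 0) {μ : 𝕜} {v : Fin q → 𝕜}
    (hv : jacobiMatrix 𝕜 q b *ᵥ v = μ • v) (h₀ : v 0 = 0) : v = 0 := by
  -- Extend `v` by zero to `ℤ` and solve the eigenvalue equation as a three-term recursion.
  let w : ℤ → 𝕜 := fun k => if h : 0 ≤ k ∧ k < q then v ⟨k.toNat, by omega⟩ else 0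
  have hwv : (fun k : Fin q => w k) = v := funext fun k => by simp [w]
  have hrow : ∀ k : Fin q, b k * w (k + 1) + b (k - 1) * w (k - 1) = μ * w k := fun k => by
    rw [← jacobiMatrix_mulVec_apply b w (.inr (by simp [w])) (.inr (by simp [w])), hwv, hv]
    simp [w]
  have hw : ∀ k : ℕ, w (k - 1) = 0 ∧ w k = 0 := by
    intro k
    induction k with
    | zero => simpa [w, NeZero.pos q] using h₀
    | succ k ih =>
      refine ⟨by simpa using ih.2, ?_⟩
      by_cases hk : k + 1 < q
      · have := hrow ⟨k, by omega⟩
        simp only [ih.1, ih.2, mul_zero, add_zero] at this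
        exact_mod_cast (mul_eq_zero.1 this).resolve_left (by exact_mod_cast hb k hk)
      · simp [w]
        omega
  rw [← hwv]
  exact funext fun k => (hw k).2

theorem jacobiMatrix_apply_mul_neg_one_pow (b : ℤ → ℝ) (i j : Fin q) :
    jacobiMatrix 𝕜 q b i j * (-1) ^ (j : ℕ) = -((-1) ^ (i : ℕ) * jacobiMatrix 𝕜 q b i j) := by
  simp only [jacobiMatrix, of_apply]
  split_ifs with h₁ h₂
  · rw [show (j : ℕ) = i + 1 by omega, pow_succ]
    ring
  · rw [show (i : ℕ) = j + 1 by omega, pow_succ]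
    ring
  · simp

theorem jacobiMatrix_mulVec_neg_one_pow_mul (b : ℤ → ℝ) (v : Fin q → 𝕜) :
    jacobiMatrix 𝕜 q b *ᵥ (fun k => (-1) ^ (k : ℕ) * v k) =
      -fun k : Fin q => (-1) ^ (k : ℕ) * (jacobiMatrix 𝕜 q b *ᵥ v) k := by
  funext i
  simp only [mulVec, dotProduct, Pi.neg_apply, Finset.mul_sum, ← Finset.sum_neg_distrib]
  refine Finset.sum_congr rfl fun j _ => ?_
  linear_combination v j * jacobiMatrix_apply_mul_neg_one_pow (𝕜 := 𝕜) b i j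

theorem spectrum_neg_jacobiMatrix (b : ℤ → ℝ) :
    spectrum 𝕜 (-jacobiMatrix 𝕜 q b) = spectrum 𝕜 (jacobiMatrix 𝕜 q b) := by
  have key : ∀ μ ∈ spectrum 𝕜 (jacobiMatrix 𝕜 q b),
      -μ ∈ spectrum 𝕜 (jacobiMatrix 𝕜 q b) := by
    intro μ hμ
    obtain ⟨v, hv₀, hv⟩ := mem_spectrum_iff_exists_mulVec_eq_smul.1 hμ
    refine mem_spectrum_iff_exists_mulVec_eq_smul.2 ⟨fun k => (-1) ^ (k : ℕ) * v k, ?_, ?_⟩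
    · exact fun h => hv₀ <| funext fun k => by simpa using congr_fun h k
    · rw [jacobiMatrix_mulVec_neg_one_pow_mul, hv]
      funext k
      simp only [Pi.neg_apply, Pi.smul_apply, smul_eq_mul]
      ring
  ext μ
  rw [← spectrum.neg_eq, Set.mem_neg]
  exact ⟨fun h => neg_neg μ ▸ key _ h, key μ⟩

-- Block `n` consists of the sites strictly between `a + q * n` and `a + q * (n + 1)`.
def blockEquiv (q : ℕ) [NeZero q] (a : ℤ) : ℤ × Fin q ≃ ℤ :=
  (Int.divModEquiv q).symm.trans (Equiv.addLeft (a + 1))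

@[simp]
theorem blockEquiv_apply [NeZero q] (a n : ℤ) (k : Fin q) :
    blockEquiv q a (n, k) = a + 1 + q * n + k := by
  simp [blockEquiv]
  ring

theorem blockOf_eq_smul_jacobiMatrix_mulVec [NeZero q] {c σ : ℤ → ℝ} {a : ℤ}
    (hc : ∀ j n, c (j + q * n) = σ n * c j) (ha : c a = 0)
    {T : lp (fun _ : ℤ => 𝕜) 2 →L[𝕜] lp (fun _ : ℤ => 𝕜) 2}
    (hT : ∀ φ j, T φ j = c j * φ (j + 1) + c (j - 1) * φ (j - 1)) (φ : lp (fun _ : ℤ => 𝕜) 2)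
    (n : ℤ) :
    blockOf (blockEquiv q a) (T φ) n =
      ((σ n : 𝕜) • jacobiMatrix 𝕜 q fun k => c (a + 1 + k)) *ᵥ blockOf (blockEquiv q a) φ n := by
  have hblock : blockOf (blockEquiv q a) φ n = fun k : Fin q => φ (a + 1 + q * n + k) := by
    funext k
    simp [blockOf]
  have hshift : ∀ k, c (a + 1 + q * n + k) = σ n * c (a + 1 + k) := fun k => by
    rw [← hc]
    ring_nf
  have hhi : c (a + 1 + (q - 1)) = 0 := by
    rw [show a + 1 + ((q : ℤ) - 1) = a + q * 1 by ring, hc, ha, mul_zero]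
  funext k
  rw [smul_mulVec, Pi.smul_apply, hblock,
    jacobiMatrix_mulVec_apply _ (fun j => φ (a + 1 + q * n + j)) (.inl (by simpa using ha))
      (.inl hhi)]
  simp only [blockOf, blockEquiv_apply, hT, smul_eq_mul]
  rw [show a + 1 + q * n + k - 1 = a + 1 + q * n + (k - 1) by ring, hshift, hshift]
  push_cast
  ring_nf

end Jacobi

section Hopping

open Real

noncomputable def hopping (α θ : ℝ) (j : ℤ) : ℝ := 2 * cos (π * (α * j + θ))

theorem cos_pi_mul_eq_zero_iff {x : ℝ} : cos (π * x) = 0 ↔ ∃ m : ℤ, x + 1 / 2 = m := by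
  rw [cos_eq_zero_iff]
  constructor
  · rintro ⟨k, hk⟩
    have : x = k + 1 / 2 := mul_left_cancel₀ pi_ne_zero (by rw [hk]; ring)
    exact ⟨k + 1, by push_cast; linarith⟩
  · rintro ⟨m, hm⟩
    exact ⟨m - 1, by rw [show x = m - 1 / 2 by linarith]; push_cast; ring⟩

variable {α θ : ℝ} {p : ℤ} {q : ℕ}

theorem hopping_eq_zero_iff {j : ℤ} : hopping α θ j = 0 ↔ ∃ m : ℤ, α * j + θ + 1 / 2 = m := by
  simp [hopping, cos_pi_mul_eq_zero_iff]

theorem hopping_add_mul (hα : α * q = p) (j n : ℤ) :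
    hopping α θ (j + q * n) = (-1) ^ (p * n) * hopping α θ j := by
  have : π * (α * ((j + q * n : ℤ) : ℝ) + θ) = π * (α * j + θ) + (p * n : ℤ) * π := by
    push_cast
    rw [← hα]
    ring
  rw [hopping, hopping, this, cos_add_int_mul_pi]
  ring

theorem dvd_sub_of_hopping_eq_zero (hα : α * q = p) (hpq : IsCoprime p q) {j j' : ℤ}
    (hj : hopping α θ j = 0) (hj' : hopping α θ j' = 0) : (q : ℤ) ∣ j - j' := by
  obtain ⟨m, hm⟩ := hopping_eq_zero_iff.1 hj
  obtain ⟨m', hm'⟩ := hopping_eq_zero_iff.1 hj'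
  have h : ((p * (j - j') : ℤ) : ℝ) = ((q * (m - m') : ℤ) : ℝ) := by
    push_cast
    rw [← hα]
    linear_combination (q : ℝ) * (hm - hm')
  exact hpq.symm.dvd_of_dvd_mul_left ⟨m - m', Int.cast_injective h⟩

theorem hopping_ne_zero_of_lt (hα : α * q = p) (hpq : IsCoprime p q) {j₀ : ℤ}
    (hj₀ : hopping α θ j₀ = 0) {k : ℕ} (hk : k + 1 < q) : hopping α θ (j₀ + 1 + k) ≠ 0 := by
  intro hk₀
  have hdvd := dvd_sub_of_hopping_eq_zero hα hpq hk₀ hj₀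
  rw [show j₀ + 1 + k - j₀ = k + 1 by ring] at hdvd
  have := Int.le_of_dvd (by omega) hdvd
  omega

end Hopping

open Real Complex

theorem rational_flux_pure_point_spectrum_general
    (p : ℤ) (q : ℕ) (hcop : Int.gcd p (q : ℤ) = 1)
    (α θ : ℝ) (hα : α = (p : ℝ) / (q : ℝ))
    (hθ : ∃ j : ℕ, j < q ∧ ∃ m : ℤ, α * (j : ℝ) + θ + 1 / 2 = (m : ℝ))
    (L : lp (fun _ : ℤ => ℂ) 2 →L[ℂ] lp (fun _ : ℤ => ℂ) 2)
    (hL : ∀ (φ : lp (fun _ : ℤ => ℂ) 2) (j : ℤ),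
      L φ j = ((2 * Real.cos (π * (α * (j : ℝ) + θ)) : ℝ) : ℂ) * φ (j + 1)
        + ((2 * Real.cos (π * (α * ((j : ℝ) - 1) + θ)) : ℝ) : ℂ) * φ (j - 1)) :
    ∃ S : Finset ℝ, S.card = q ∧
      spectrum ℂ L = Complex.ofReal '' (S : Set ℝ) ∧
      ∀ μ ∈ S,
        (∃ φ : lp (fun _ : ℤ => ℂ) 2, φ ≠ 0 ∧ L φ = (μ : ℂ) • φ) ∧
        ¬ FiniteDimensional ℂ
          (LinearMap.ker (L - (μ : ℂ) • (1 : lp (fun _ : ℤ => ℂ) 2 →L[ℂ] lp (fun _ : ℤ => ℂ) 2)).toLinearMap) := by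
  obtain ⟨j₀, hj₀, m₀, hm₀⟩ := hθ
  have : NeZero q := ⟨by omega⟩
  have hαq : α * q = p := by rw [hα, div_mul_cancel₀ _ (Nat.cast_ne_zero.2 (NeZero.ne q))]
  have hzero : hopping α θ j₀ = 0 := hopping_eq_zero_iff.2 ⟨m₀, by exact_mod_cast hm₀⟩
  set A := jacobiMatrix ℂ q fun k => hopping α θ (j₀ + 1 + k)
  have hA : A.IsHermitian := jacobiMatrix_isHermitian _
  have hblocks := blockOf_eq_smul_jacobiMatrix_mulVec (hopping_add_mul hαq) hzero (T := L)
    fun φ j => by simp [hL, hopping]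
  have hspecL : spectrum ℂ L = spectrum ℂ A :=
    spectrum_eq_of_blockOf_eq_sign_smul_mulVec (fun n => neg_one_zpow_eq_or ℝ (p * n))
      (infinite_setOf_neg_one_zpow_mul_eq_one ℝ p) (spectrum_neg_jacobiMatrix _) hblocks
  have hsimple : Injective hA.eigenvalues := hA.eigenvalues_injective 0 fun _ _ hv h₀ =>
    eq_zero_of_jacobiMatrix_mulVec_eq_smul
      (fun _ hk => hopping_ne_zero_of_lt hαq (Int.isCoprime_iff_gcd_eq_one.2 hcop) hzero hk) hv h₀
  have hspecA : spectrum ℂ A = ofReal '' (Finset.univ.image hA.eigenvalues : Set ℝ) := by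
    rw [hA.spectrum_eq_image_range]
    simp
  refine ⟨Finset.univ.image hA.eigenvalues, by simp [Finset.card_image_of_injective _ hsimple],
    hspecL.trans hspecA, fun μ hμ => ?_⟩
  have hker := not_finiteDimensional_ker_of_blockOf_eq_sign_smul_mulVec
    (infinite_setOf_neg_one_zpow_mul_eq_one ℝ p) hblocks (hspecA ▸ Set.mem_image_of_mem _ hμ)
  obtain ⟨φ, hφ, hLφ⟩ := LinearMap.exists_ne_zero_of_not_finiteDimensional_ker hker
  exact ⟨⟨φ, hφ, sub_eq_zero.1 hLφ⟩, hker⟩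

/-- For rational `α = p/q` in lowest terms such that `αj + θ + 1/2 ∈ ℤ` for
some `j = 0, …, q−1`, the spectrum of `L_{α,θ}` consists of exactly `q` distinct real
numbers, each an eigenvalue with infinite-dimensional eigenspace. -/
theorem rational_flux_pure_point_spectrum
    (p : ℤ) (q : ℕ) (hq : 1 ≤ q) (hcop : Int.gcd p (q : ℤ) = 1)
    (α θ : ℝ) (hα : α = (p : ℝ) / (q : ℝ))
    (hθ : ∃ j : ℕ, j < q ∧ ∃ m : ℤ, α * (j : ℝ) + θ + 1 / 2 = (m : ℝ))
    (L : lp (fun _ : ℤ => ℂ) 2 →L[ℂ] lp (fun _ : ℤ => ℂ) 2)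
    (hL : ∀ (φ : lp (fun _ : ℤ => ℂ) 2) (j : ℤ),
      L φ j = ((2 * Real.cos (π * (α * (j : ℝ) + θ)) : ℝ) : ℂ) * φ (j + 1)
        + ((2 * Real.cos (π * (α * ((j : ℝ) - 1) + θ)) : ℝ) : ℂ) * φ (j - 1)) :
    ∃ S : Finset ℝ, S.card = q ∧
      spectrum ℂ L = Complex.ofReal '' (S : Set ℝ) ∧
      ∀ μ ∈ S,
        (∃ φ : lp (fun _ : ℤ => ℂ) 2, φ ≠ 0 ∧ L φ = (μ : ℂ) • φ) ∧
        ¬ FiniteDimensional ℂ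
          (LinearMap.ker (L - (μ : ℂ) • (1 : lp (fun _ : ℤ => ℂ) 2 →L[ℂ] lp (fun _ : ℤ => ℂ) 2)).toLinearMap) :=
  rational_flux_pure_point_spectrum_general p q hcop α θ hα hθ L hL
end

section
/- Let γ > 0. Then the function η is strictly decreasing on the interval (−∞, 1). -/
/-!
Write `η γ = γ S + 4 C`, where `S` and `C` continue `sin (π √z) / √z` and `cos (π √z)` to `z < 0`
by `sinh (π √(-z)) / √(-z)` and `cosh (π √(-z))`. Both are strictly decreasing on `(-∞, 1]`. On
`[0, 1]`, `π √z` increases through `[0, π]`, where `cos` and `sinc` decrease (`x cos x < sin x`).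
On `(-∞, 0]`, `π √(-z)` decreases through `[0, ∞)`, where `cosh` and `sinh t / t` increase
(`sinh t < t cosh t`).
-/

open Real

/-- The function `η(z) = γ sin(π√z)/√z + 4 cos(π√z)` for `z > 0`, `η(0) = γπ + 4`, and
`η(z) = γ sinh(π√(−z))/√(−z) + 4 cosh(π√(−z))` for `z < 0`. -/
noncomputable def eta (γ z : ℝ) : ℝ :=
  if 0 < z then
    γ * Real.sin (π * Real.sqrt z) / Real.sqrt z + 4 * Real.cos (π * Real.sqrt z)
  else if z = 0 then γ * π + 4
  else γ * Real.sinh (π * Real.sqrt (-z)) / Real.sqrt (-z) + 4 * Real.cosh (π * Real.sqrt (-z))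

open Set

namespace Real

theorem mul_cos_lt_sin {x : ℝ} (h0 : 0 < x) (hx : x < π) : x * cos x < sin x := by
  rcases lt_or_ge x (π / 2) with hx' | hx'
  · have hcos : 0 < cos x := cos_pos_of_mem_Ioo ⟨by linarith, hx'⟩
    have := lt_tan h0 hx'
    rwa [tan_eq_sin_div_cos, lt_div_iff₀ hcos] at this
  · have hcos : cos x ≤ 0 := cos_nonpos_of_pi_div_two_le_of_le hx' (by linarith)
    nlinarith [sin_pos_of_pos_of_lt_pi h0 hx]

theorem sinh_lt_mul_cosh {x : ℝ} (hx : 0 < x) : sinh x < x * cosh x := by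
  have hmono : StrictMonoOn (fun t => t * cosh t - sinh t) (Ici 0) := by
    refine strictMonoOn_of_deriv_pos (convex_Ici 0) (by fun_prop) fun t ht => ?_
    rw [interior_Ici] at ht
    have hderiv : HasDerivAt (fun t => t * cosh t - sinh t) (t * sinh t) t :=
      (((hasDerivAt_id' t).fun_mul (hasDerivAt_cosh t)).fun_sub
        (hasDerivAt_sinh t)).congr_deriv (by ring)
    rw [hderiv.deriv]
    exact mul_pos ht (sinh_pos_iff.2 ht)
  simpa using hmono self_mem_Ici hx.le hx

theorem strictAntiOn_sinc : StrictAntiOn sinc (Icc 0 π) := by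
  refine strictAntiOn_of_deriv_neg (convex_Icc 0 π) continuous_sinc.continuousOn fun x hx => ?_
  rw [interior_Icc] at hx
  have hx0 : x ≠ 0 := hx.1.ne'
  have hderiv : HasDerivAt sinc ((cos x * x - sin x * 1) / x ^ 2) x := by
    refine ((hasDerivAt_sin x).div (hasDerivAt_id x) hx0).congr_of_eventuallyEq ?_
    filter_upwards [isOpen_ne.mem_nhds hx0] with y hy
    exact sinc_of_ne_zero hy
  rw [hderiv.deriv]
  have := mul_cos_lt_sin hx.1 hx.2
  exact div_neg_of_neg_of_pos (by linarith) (by positivity)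

theorem strictMonoOn_sinh_div_self : StrictMonoOn (fun x => sinh x / x) (Ioi 0) := by
  refine strictMonoOn_of_deriv_pos (convex_Ioi 0)
    (continuous_sinh.continuousOn.div continuousOn_id fun x hx => ne_of_gt hx) fun x hx => ?_
  rw [interior_Ioi] at hx
  rw [((hasDerivAt_sinh x).fun_div (hasDerivAt_id' x) (ne_of_gt hx)).deriv]
  have := sinh_lt_mul_cosh hx
  exact div_pos (by linarith) (pow_pos hx 2)

end Real

theorem StrictAntiOn.Iic_of_Iio {α β : Type*} [LinearOrder α] [Preorder β] {f : α → β} {a : α}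
    (h : StrictAntiOn f (Iio a)) (ha : ∀ x < a, f a < f x) : StrictAntiOn f (Iic a) := by
  intro x hx y hy hxy
  rcases (mem_Iic.1 hy).lt_or_eq with hya | rfl
  · exact h (hxy.trans hya) hya hxy
  · exact ha x hxy

theorem strictMonoOn_pi_mul_sqrt : StrictMonoOn (fun z => π * √z) (Ici 0) :=
  fun _ hx _ _ hxy => mul_lt_mul_of_pos_left (sqrt_lt_sqrt hx hxy) pi_pos

theorem strictAntiOn_pi_mul_sqrt_neg : StrictAntiOn (fun z => π * √(-z)) (Iic 0) :=
  fun _ hx _ hy hxy => strictMonoOn_pi_mul_sqrt (mem_Ici.2 (neg_nonneg.2 hy))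
    (mem_Ici.2 (neg_nonneg.2 hx)) (neg_lt_neg hxy)

theorem pi_mul_sqrt_mem_Icc {z : ℝ} (hz : z ∈ Icc 0 1) : π * √z ∈ Icc 0 π :=
  ⟨by positivity, mul_le_of_le_one_right pi_pos.le (sqrt_le_one.2 hz.2)⟩

/-- The continuation of `sin (π √z) / √z` to all of `ℝ`, written through `sinc` so that its value
`π` at `z = 0` is not a special case. -/
noncomputable def etaSin (z : ℝ) : ℝ :=
  if 0 ≤ z then π * sinc (π * √z) else π * (sinh (π * √(-z)) / (π * √(-z)))

noncomputable def etaCos (z : ℝ) : ℝ :=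
  if 0 ≤ z then cos (π * √z) else cosh (π * √(-z))

theorem etaSin_of_nonneg {z : ℝ} (hz : 0 ≤ z) : etaSin z = π * sinc (π * √z) := if_pos hz

theorem etaSin_of_neg {z : ℝ} (hz : z < 0) :
    etaSin z = π * (sinh (π * √(-z)) / (π * √(-z))) := if_neg hz.not_ge

theorem etaCos_of_nonneg {z : ℝ} (hz : 0 ≤ z) : etaCos z = cos (π * √z) := if_pos hz

theorem etaCos_of_nonpos {z : ℝ} (hz : z ≤ 0) : etaCos z = cosh (π * √(-z)) := by
  rcases hz.lt_or_eq with hz | rfl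
  · exact if_neg hz.not_ge
  · simp [etaCos]

theorem eta_eq (γ z : ℝ) : eta γ z = γ * etaSin z + 4 * etaCos z := by
  rcases lt_trichotomy z 0 with hz | rfl | hz
  · have hs : √(-z) ≠ 0 := (sqrt_pos.2 (neg_pos.2 hz)).ne'
    rw [eta, if_neg hz.not_gt, if_neg hz.ne, etaSin_of_neg hz, etaCos_of_nonpos hz.le]
    field_simp
  · simp [eta, etaSin, etaCos]
  · have hs : √z ≠ 0 := (sqrt_pos.2 hz).ne'
    rw [eta, if_pos hz, etaSin_of_nonneg hz.le, etaCos_of_nonneg hz.le,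
      sinc_of_ne_zero (mul_ne_zero pi_ne_zero hs)]
    field_simp

theorem strictAntiOn_etaSin : StrictAntiOn etaSin (Iic 1) := by
  have hneg : StrictAntiOn etaSin (Iic 0) := by
    refine StrictAntiOn.Iic_of_Iio (fun x hx y hy hxy => ?_) fun x hx => ?_
    · have huy : 0 < π * √(-y) := mul_pos pi_pos (sqrt_pos.2 (neg_pos.2 hy))
      rw [etaSin_of_neg hx, etaSin_of_neg hy]
      have hyx := strictAntiOn_pi_mul_sqrt_neg (mem_Iic.2 hx.le) (mem_Iic.2 hy.le) hxy
      exact mul_lt_mul_of_pos_left (strictMonoOn_sinh_div_self huy (huy.trans hyx) hyx) pi_pos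
    · have hu : 0 < π * √(-x) := mul_pos pi_pos (sqrt_pos.2 (neg_pos.2 hx))
      rw [etaSin_of_nonneg le_rfl, etaSin_of_neg hx, sqrt_zero, mul_zero, sinc_zero, mul_one]
      exact lt_mul_of_one_lt_right pi_pos ((one_lt_div hu).2 (self_lt_sinh_iff.2 hu))
  have hpos : StrictAntiOn etaSin (Icc 0 1) := by
    intro x hx y hy hxy
    rw [etaSin_of_nonneg hx.1, etaSin_of_nonneg hy.1]
    exact mul_lt_mul_of_pos_left (strictAntiOn_sinc (pi_mul_sqrt_mem_Icc hx)
      (pi_mul_sqrt_mem_Icc hy) (strictMonoOn_pi_mul_sqrt hx.1 hy.1 hxy)) pi_pos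
  rw [← Iic_union_Icc_eq_Iic zero_le_one]
  exact hneg.union hpos isGreatest_Iic (isLeast_Icc zero_le_one)

theorem strictAntiOn_etaCos : StrictAntiOn etaCos (Iic 1) := by
  have hneg : StrictAntiOn etaCos (Iic 0) := by
    intro x hx y hy hxy
    rw [etaCos_of_nonpos hx, etaCos_of_nonpos hy]
    exact cosh_strictMonoOn (mem_Ici.2 (by positivity)) (mem_Ici.2 (by positivity))
      (strictAntiOn_pi_mul_sqrt_neg hx hy hxy)
  have hpos : StrictAntiOn etaCos (Icc 0 1) := by
    intro x hx y hy hxy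
    rw [etaCos_of_nonneg hx.1, etaCos_of_nonneg hy.1]
    exact strictAntiOn_cos (pi_mul_sqrt_mem_Icc hx) (pi_mul_sqrt_mem_Icc hy)
      (strictMonoOn_pi_mul_sqrt hx.1 hy.1 hxy)
  rw [← Iic_union_Icc_eq_Iic zero_le_one]
  exact hneg.union hpos isGreatest_Iic (isLeast_Icc zero_le_one)

/-- For `γ > 0`, the function `η` is strictly decreasing on `(−∞, 1)`. -/
theorem eta_strictAntiOn_of_pos (γ : ℝ) (hγ : 0 < γ) :
    StrictAntiOn (eta γ) (Set.Iio (1 : ℝ)) := by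
  intro x hx y hy hxy
  have hsin := strictAntiOn_etaSin (Iio_subset_Iic_self hx) (Iio_subset_Iic_self hy) hxy
  have hcos := strictAntiOn_etaCos (Iio_subset_Iic_self hx) (Iio_subset_Iic_self hy) hxy
  rw [eta_eq, eta_eq]
  gcongr
end

section
/- Let γ < 0. Then there exists a unique z₀ ∈ (−∞, 1) such that η is strictly decreasing on (−∞, z₀] and strictly increasing on [z₀, 1). Moreover z₀ ∈ (0, 1) if −12/π < γ < 0, z₀ = 0 if γ = −12/π, and z₀ < 0 if γ < −12/π. -/
open Real

/-!
With `t = π√z` for `z > 0` and `s = π√(−z)` for `z < 0`, the derivative `η'(z)` is a positive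
multiple of `−γπ − Θ(z)`, where `Θ(z) = χ(t) = 4t² sin t / (sin t − t cos t)`, resp.
`Θ(z) = ψ(s) = 4s² sinh s / (s cosh s − sinh s)`, and `Θ(0) = 12`. As `χ` decreases on `(0, π)`
from `12` to `0` and `ψ` increases on `(0, ∞)` from `12` to `∞`, `Θ` is continuous and strictly
decreasing on `(−∞, 1]`, with `Θ(1) = 0` and `Θ → ∞` at `−∞`. So `Θ(z₀) = −γπ` has exactly one
solution `z₀ < 1`, `η' < 0` to its left and `η' > 0` to its right, and `z₀ > 0` exactly when
`−γπ < Θ(0) = 12`. Each bound on `χ` and `ψ` reduces to "`f(0) = 0` and `f' > 0` imply `f > 0`"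
for an explicit trigonometric or hyperbolic expression `f`.
-/

open Set Filter Topology

lemma pos_of_hasDerivAt_pos {f f' : ℝ → ℝ} {b : ℝ} (hb : 0 < b) (hf0 : f 0 = 0)
    (hf : ∀ x ∈ Icc 0 b, HasDerivAt f (f' x) x) (hf' : ∀ x ∈ Ioo 0 b, 0 < f' x) : 0 < f b := by
  refine hf0 ▸ strictMonoOn_of_hasDerivWithinAt_pos (f' := f') (convex_Icc 0 b)
    (fun x hx => (hf x hx).continuousAt.continuousWithinAt) (fun x hx => ?_) (fun x hx => ?_)
    (left_mem_Icc.2 hb.le) (right_mem_Icc.2 hb.le) hb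
  all_goals rw [interior_Icc] at hx
  exacts [(hf x (Ioo_subset_Icc_self hx)).hasDerivWithinAt, hf' x hx]

lemma strictMonoOn_of_deriv_pos_of_ne {D : Set ℝ} (hD : Convex ℝ D) {f : ℝ → ℝ} {c : ℝ}
    (hf : ContinuousOn f D) (hf' : ∀ x ∈ interior D, x ≠ c → 0 < deriv f x) :
    StrictMonoOn f D := by
  have key : ∀ a ∈ D, ∀ b ∈ D, a < b → c ∉ Ioo a b → f a < f b := by
    intro a ha b hb hab hc
    have hsub : Icc a b ⊆ D := hD.ordConnected.out ha hb
    refine strictMonoOn_of_deriv_pos (convex_Icc a b) (hf.mono hsub)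
      (fun x hx => hf' x (interior_mono hsub hx) ?_) (left_mem_Icc.2 hab.le)
      (right_mem_Icc.2 hab.le) hab
    rintro rfl
    rw [interior_Icc] at hx
    exact hc hx
  intro x hx y hy hxy
  by_cases hc : c ∈ Ioo x y
  · have hcD : c ∈ D := hD.ordConnected.out hx hy (Ioo_subset_Icc_self hc)
    exact (key x hx c hcD hc.1 fun h => h.2.false).trans (key c hcD y hy hc.2 fun h => h.1.false)
  · exact key x hx y hy hxy hc

lemma strictAntiOn_of_deriv_neg_of_ne {D : Set ℝ} (hD : Convex ℝ D) {f : ℝ → ℝ} {c : ℝ}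
    (hf : ContinuousOn f D) (hf' : ∀ x ∈ interior D, x ≠ c → deriv f x < 0) :
    StrictAntiOn f D := fun x hx y hy hxy =>
  neg_lt_neg_iff.1 <| strictMonoOn_of_deriv_pos_of_ne (c := c) hD hf.neg
    (fun z hz hzc => by rw [deriv.neg]; exact neg_pos.2 (hf' z hz hzc)) hx hy hxy

lemma le_of_strictAntiOn_Iic_of_strictMonoOn_Ico {α β : Type*} [LinearOrder α] [Preorder β]
    {f : α → β} {a b w : α} (ha : StrictAntiOn f (Iic a)) (hw : StrictMonoOn f (Ico w b))
    (hab : a < b) : a ≤ w := by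
  by_contra! h
  exact lt_asymm (ha h.le le_rfl h) (hw ⟨le_rfl, h.trans hab⟩ ⟨h.le, hab⟩ h)

lemma continuous_dslope_sinh : Continuous (dslope sinh 0) :=
  continuous_iff_continuousAt.2 fun x => by
    rcases eq_or_ne x 0 with rfl | hx
    · exact continuousAt_dslope_same.2 (differentiable_sinh 0)
    · exact (continuousAt_dslope_of_ne hx).2 continuous_sinh.continuousAt

lemma sin_sub_mul_cos_pos {t : ℝ} (ht : 0 < t) (htπ : t ≤ π) : 0 < sin t - t * cos t :=
  pos_of_hasDerivAt_pos (f := fun x => sin x - x * cos x) ht (by simp)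
    (fun x _ => ((hasDerivAt_sin x).fun_sub
      ((hasDerivAt_id' x).fun_mul (hasDerivAt_cos x))).congr_deriv (by ring))
    (fun x hx => mul_pos hx.1 (sin_pos_of_pos_of_lt_pi hx.1 (hx.2.trans_le htπ)))

lemma mul_cosh_sub_sinh_pos {s : ℝ} (hs : 0 < s) : 0 < s * cosh s - sinh s :=
  pos_of_hasDerivAt_pos (f := fun x => x * cosh x - sinh x) hs (by simp)
    (fun x _ => (((hasDerivAt_id' x).fun_mul (hasDerivAt_cosh x)).fun_sub
      (hasDerivAt_sinh x)).congr_deriv (by ring))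
    (fun x hx => mul_pos hx.1 (sinh_pos_iff.2 hx.1))

noncomputable def trigThreshold (t : ℝ) : ℝ := 4 * t ^ 2 * sin t / (sin t - t * cos t)

noncomputable def hypThreshold (s : ℝ) : ℝ := 4 * s ^ 2 * sinh s / (s * cosh s - sinh s)

lemma trigThreshold_lt_twelve {t : ℝ} (ht : 0 < t) (htπ : t ≤ π) : trigThreshold t < 12 := by
  have hK : 0 < 3 * (sin t - t * cos t) - t ^ 2 * sin t :=
    pos_of_hasDerivAt_pos (f := fun x => 3 * (sin x - x * cos x) - x ^ 2 * sin x) ht (by simp)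
      (fun x _ => ((((hasDerivAt_sin x).fun_sub
        ((hasDerivAt_id' x).fun_mul (hasDerivAt_cos x))).const_mul 3).fun_sub
        ((hasDerivAt_pow 2 x).fun_mul (hasDerivAt_sin x))).congr_deriv
          (show _ = x * (sin x - x * cos x) by ring))
      (fun x hx => mul_pos hx.1 (sin_sub_mul_cos_pos hx.1 (hx.2.le.trans htπ)))
  rw [trigThreshold, div_lt_iff₀ (sin_sub_mul_cos_pos ht htπ)]
  linarith

lemma twelve_sub_lt_trigThreshold {t : ℝ} (ht : 0 < t) (htπ : t ≤ π) :
    12 - 2 * t ^ 2 < trigThreshold t := by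
  have hV : 0 < 3 * t ^ 2 * sin t - t ^ 3 * cos t - 6 * (sin t - t * cos t) :=
    pos_of_hasDerivAt_pos
      (f := fun x => 3 * x ^ 2 * sin x - x ^ 3 * cos x - 6 * (sin x - x * cos x)) ht (by simp)
      (fun x _ => (((((hasDerivAt_pow 2 x).const_mul 3).fun_mul (hasDerivAt_sin x)).fun_sub
        ((hasDerivAt_pow 3 x).fun_mul (hasDerivAt_cos x))).fun_sub
        (((hasDerivAt_sin x).fun_sub
          ((hasDerivAt_id' x).fun_mul (hasDerivAt_cos x))).const_mul 6)).congr_deriv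
          (show _ = x ^ 3 * sin x by push_cast; ring))
      (fun x hx => mul_pos (pow_pos hx.1 3) (sin_pos_of_pos_of_lt_pi hx.1 (hx.2.trans_le htπ)))
  rw [trigThreshold, lt_div_iff₀ (sin_sub_mul_cos_pos ht htπ)]
  nlinarith

lemma twelve_lt_hypThreshold {s : ℝ} (hs : 0 < s) : 12 < hypThreshold s := by
  have hK : 0 < s ^ 2 * sinh s - 3 * (s * cosh s - sinh s) :=
    pos_of_hasDerivAt_pos (f := fun x => x ^ 2 * sinh x - 3 * (x * cosh x - sinh x)) hs (by simp)
      (fun x _ => (((hasDerivAt_pow 2 x).fun_mul (hasDerivAt_sinh x)).fun_sub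
        ((((hasDerivAt_id' x).fun_mul (hasDerivAt_cosh x)).fun_sub
          (hasDerivAt_sinh x)).const_mul 3)).congr_deriv
          (show _ = x * (x * cosh x - sinh x) by push_cast; ring))
      (fun x hx => mul_pos hx.1 (mul_cosh_sub_sinh_pos hx.1))
  rw [hypThreshold, lt_div_iff₀ (mul_cosh_sub_sinh_pos hs)]
  linarith

lemma hypThreshold_lt {s : ℝ} (hs : 0 < s) : hypThreshold s < 12 + 2 * s ^ 2 := by
  have hV : 0 < 6 * (s * cosh s - sinh s) + s ^ 3 * cosh s - 3 * s ^ 2 * sinh s :=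
    pos_of_hasDerivAt_pos
      (f := fun x => 6 * (x * cosh x - sinh x) + x ^ 3 * cosh x - 3 * x ^ 2 * sinh x) hs
      (by simp)
      (fun x _ => ((((((hasDerivAt_id' x).fun_mul (hasDerivAt_cosh x)).fun_sub
          (hasDerivAt_sinh x)).const_mul 6).fun_add
        ((hasDerivAt_pow 3 x).fun_mul (hasDerivAt_cosh x))).fun_sub
        (((hasDerivAt_pow 2 x).const_mul 3).fun_mul (hasDerivAt_sinh x))).congr_deriv
          (show _ = x ^ 3 * sinh x by push_cast; ring))
      (fun x hx => mul_pos (pow_pos hx.1 3) (sinh_pos_iff.2 hx.1))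
  rw [hypThreshold, div_lt_iff₀ (mul_cosh_sub_sinh_pos hs)]
  nlinarith

lemma self_lt_hypThreshold {s : ℝ} (hs : 0 < s) : s < hypThreshold s := by
  have hsinh : s ≤ sinh s := self_le_sinh_iff.2 hs.le
  have hexp : cosh s - sinh s ≤ 1 := by
    rw [cosh_sub_sinh]
    exact exp_le_one_iff.2 (by linarith)
  rw [hypThreshold, lt_div_iff₀ (mul_cosh_sub_sinh_pos hs)]
  nlinarith [mul_pos hs hs]

lemma hasDerivAt_trigThreshold {t : ℝ} (ht : sin t - t * cos t ≠ 0) :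
    HasDerivAt trigThreshold
      (-4 * t * (t ^ 2 + t * sin t * cos t - 2 * sin t * sin t) / (sin t - t * cos t) ^ 2) t := by
  refine (((hasDerivAt_pow 2 t).const_mul 4).fun_mul (hasDerivAt_sin t)).fun_div
    ((hasDerivAt_sin t).fun_sub ((hasDerivAt_id' t).fun_mul (hasDerivAt_cos t))) ht
    |>.congr_deriv ?_
  push_cast
  congr 1
  linear_combination (-4 * t ^ 3) * sin_sq_add_cos_sq t

lemma hasDerivAt_hypThreshold {s : ℝ} (hs : s * cosh s - sinh s ≠ 0) :
    HasDerivAt hypThreshold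
      (4 * s * (s ^ 2 + s * sinh s * cosh s - 2 * sinh s * sinh s) / (s * cosh s - sinh s) ^ 2)
      s := by
  refine (((hasDerivAt_pow 2 s).const_mul 4).fun_mul (hasDerivAt_sinh s)).fun_div
    (((hasDerivAt_id' s).fun_mul (hasDerivAt_cosh s)).fun_sub (hasDerivAt_sinh s)) hs
    |>.congr_deriv ?_
  push_cast
  congr 1
  linear_combination (4 * s ^ 3) * cosh_sq_sub_sinh_sq s

/- `R(t) = t² + t sin t cos t − 2 sin² t` from `hasDerivAt_trigThreshold` is positive on `(0, π)`
since `R(0) = R'(0) = 0` and `R''(t) = 4 sin t (sin t − t cos t)`; likewise for `hypThreshold`. -/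
lemma trigThreshold_strictAntiOn : StrictAntiOn trigThreshold (Ioo 0 π) := by
  have hR' : ∀ y ∈ Ioo 0 π,
      0 < 2 * y + y * (cos y * cos y - sin y * sin y) - 3 * sin y * cos y :=
    fun y hy => pos_of_hasDerivAt_pos
      (f := fun x => 2 * x + x * (cos x * cos x - sin x * sin x) - 3 * sin x * cos x)
      (f' := fun x => 4 * sin x * (sin x - x * cos x)) hy.1 (by simp)
      (fun x _ => ((((hasDerivAt_id' x).const_mul 2).fun_add ((hasDerivAt_id' x).fun_mul
        (((hasDerivAt_cos x).fun_mul (hasDerivAt_cos x)).fun_sub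
          ((hasDerivAt_sin x).fun_mul (hasDerivAt_sin x))))).fun_sub
        (((hasDerivAt_sin x).const_mul 3).fun_mul (hasDerivAt_cos x))).congr_deriv
          (by linear_combination (-2) * sin_sq_add_cos_sq x))
      (fun x hx => mul_pos (mul_pos four_pos (sin_pos_of_pos_of_lt_pi hx.1 (hx.2.trans hy.2)))
        (sin_sub_mul_cos_pos hx.1 (hx.2.trans hy.2).le))
  have hR : ∀ t ∈ Ioo 0 π, 0 < t ^ 2 + t * sin t * cos t - 2 * sin t * sin t := fun t ht =>
    pos_of_hasDerivAt_pos (f := fun x => x ^ 2 + x * sin x * cos x - 2 * sin x * sin x) ht.1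
      (by simp)
      (fun x _ => (((hasDerivAt_pow 2 x).fun_add (((hasDerivAt_id' x).fun_mul
        (hasDerivAt_sin x)).fun_mul (hasDerivAt_cos x))).fun_sub
        (((hasDerivAt_sin x).const_mul 2).fun_mul (hasDerivAt_sin x))).congr_deriv
          (by push_cast; ring))
      (fun y hy => hR' y ⟨hy.1, hy.2.trans ht.2⟩)
  have hP : ∀ t ∈ Ioo 0 π, 0 < sin t - t * cos t := fun t ht => sin_sub_mul_cos_pos ht.1 ht.2.le
  refine strictAntiOn_of_deriv_neg (convex_Ioo 0 π)
    (fun t ht => (hasDerivAt_trigThreshold (hP t ht).ne').continuousAt.continuousWithinAt)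
    (fun t ht => ?_)
  rw [interior_Ioo] at ht
  rw [(hasDerivAt_trigThreshold (hP t ht).ne').deriv]
  exact div_neg_of_neg_of_pos (by nlinarith [hR t ht, ht.1]) (pow_pos (hP t ht) 2)

lemma hypThreshold_strictMonoOn : StrictMonoOn hypThreshold (Ioi 0) := by
  have hR' : ∀ y, 0 < y →
      0 < 2 * y + y * (cosh y * cosh y + sinh y * sinh y) - 3 * sinh y * cosh y :=
    fun y hy => pos_of_hasDerivAt_pos
      (f := fun x => 2 * x + x * (cosh x * cosh x + sinh x * sinh x) - 3 * sinh x * cosh x)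
      (f' := fun x => 4 * sinh x * (x * cosh x - sinh x)) hy (by simp)
      (fun x _ => ((((hasDerivAt_id' x).const_mul 2).fun_add ((hasDerivAt_id' x).fun_mul
        (((hasDerivAt_cosh x).fun_mul (hasDerivAt_cosh x)).fun_add
          ((hasDerivAt_sinh x).fun_mul (hasDerivAt_sinh x))))).fun_sub
        (((hasDerivAt_sinh x).const_mul 3).fun_mul (hasDerivAt_cosh x))).congr_deriv
          (by linear_combination (-2) * cosh_sq_sub_sinh_sq x))
      (fun x hx => mul_pos (mul_pos four_pos (sinh_pos_iff.2 hx.1)) (mul_cosh_sub_sinh_pos hx.1))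
  have hR : ∀ s, 0 < s → 0 < s ^ 2 + s * sinh s * cosh s - 2 * sinh s * sinh s := fun s hs =>
    pos_of_hasDerivAt_pos (f := fun x => x ^ 2 + x * sinh x * cosh x - 2 * sinh x * sinh x) hs
      (by simp)
      (fun x _ => (((hasDerivAt_pow 2 x).fun_add (((hasDerivAt_id' x).fun_mul
        (hasDerivAt_sinh x)).fun_mul (hasDerivAt_cosh x))).fun_sub
        (((hasDerivAt_sinh x).const_mul 2).fun_mul (hasDerivAt_sinh x))).congr_deriv
          (by push_cast; ring))
      (fun y hy => hR' y hy.1)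
  have hQ : ∀ s ∈ Ioi (0 : ℝ), 0 < s * cosh s - sinh s := fun s hs => mul_cosh_sub_sinh_pos hs
  refine strictMonoOn_of_deriv_pos (convex_Ioi 0)
    (fun s hs => (hasDerivAt_hypThreshold (hQ s hs).ne').continuousAt.continuousWithinAt)
    (fun s hs => ?_)
  rw [interior_Ioi] at hs
  rw [(hasDerivAt_hypThreshold (hQ s hs).ne').deriv]
  exact div_pos (mul_pos (mul_pos four_pos hs) (hR s hs)) (pow_pos (hQ s hs) 2)

/-- The value of `−γπ` for which `z` is a critical point of `eta γ`. The value `12` at `0` is the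
common limit of both branches. -/
noncomputable def etaThreshold (z : ℝ) : ℝ :=
  if 0 < z then trigThreshold (π * √z) else if z = 0 then 12 else hypThreshold (π * √(-z))

lemma etaThreshold_of_pos {z : ℝ} (hz : 0 < z) : etaThreshold z = trigThreshold (π * √z) :=
  if_pos hz

lemma etaThreshold_zero : etaThreshold 0 = 12 := by simp [etaThreshold]

lemma etaThreshold_of_neg {z : ℝ} (hz : z < 0) : etaThreshold z = hypThreshold (π * √(-z)) := by
  rw [etaThreshold, if_neg hz.not_gt, if_neg hz.ne]

lemma etaThreshold_one : etaThreshold 1 = 0 := by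
  simp [etaThreshold_of_pos one_pos, trigThreshold]

lemma pi_mul_sqrt_pos {z : ℝ} (hz : 0 < z) : 0 < π * √z := by positivity

lemma pi_mul_sqrt_lt_pi {z : ℝ} (hz : z < 1) : π * √z < π :=
  mul_lt_of_lt_one_right pi_pos ((sqrt_lt' one_pos).2 (by simpa using hz))

lemma etaThreshold_lt_twelve {z : ℝ} (hz : 0 < z) (hz1 : z < 1) : etaThreshold z < 12 := by
  rw [etaThreshold_of_pos hz]
  exact trigThreshold_lt_twelve (pi_mul_sqrt_pos hz) (pi_mul_sqrt_lt_pi hz1).le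

lemma twelve_lt_etaThreshold {z : ℝ} (hz : z < 0) : 12 < etaThreshold z := by
  rw [etaThreshold_of_neg hz]
  exact twelve_lt_hypThreshold (pi_mul_sqrt_pos (neg_pos.2 hz))

lemma etaThreshold_strictAntiOn : StrictAntiOn etaThreshold (Iio 1) := by
  intro x hx y hy hxy
  rcases lt_trichotomy x 0 with hx0 | rfl | hx0 <;> rcases lt_trichotomy y 0 with hy0 | rfl | hy0
  · rw [etaThreshold_of_neg hx0, etaThreshold_of_neg hy0]
    refine hypThreshold_strictMonoOn (pi_mul_sqrt_pos (neg_pos.2 hy0))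
      (pi_mul_sqrt_pos (neg_pos.2 hx0)) ?_
    gcongr
    linarith
  · exact etaThreshold_zero ▸ twelve_lt_etaThreshold hx0
  · exact (etaThreshold_lt_twelve hy0 hy).trans (twelve_lt_etaThreshold hx0)
  · exact absurd hxy (by linarith)
  · exact absurd hxy (lt_irrefl 0)
  · exact etaThreshold_zero ▸ etaThreshold_lt_twelve hy0 hy
  · exact absurd hxy (by linarith)
  · exact absurd hxy (by linarith)
  · rw [etaThreshold_of_pos hx0, etaThreshold_of_pos hy0]
    exact trigThreshold_strictAntiOn ⟨pi_mul_sqrt_pos hx0, pi_mul_sqrt_lt_pi hx⟩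
      ⟨pi_mul_sqrt_pos hy0, pi_mul_sqrt_lt_pi hy⟩ (by gcongr)

lemma abs_etaThreshold_sub_twelve_le {z : ℝ} (hz : z < 1) :
    |etaThreshold z - 12| ≤ 2 * π ^ 2 * |z| := by
  rcases lt_trichotomy z 0 with hz0 | rfl | hz0
  · have h := hypThreshold_lt (pi_mul_sqrt_pos (neg_pos.2 hz0))
    rw [mul_pow, sq_sqrt (neg_pos.2 hz0).le, ← etaThreshold_of_neg hz0] at h
    rw [abs_of_pos (sub_pos.2 (twelve_lt_etaThreshold hz0)), abs_of_neg hz0]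
    linarith
  · simp [etaThreshold_zero]
  · have h := twelve_sub_lt_trigThreshold (pi_mul_sqrt_pos hz0) (pi_mul_sqrt_lt_pi hz).le
    rw [mul_pow, sq_sqrt hz0.le, ← etaThreshold_of_pos hz0] at h
    rw [abs_of_neg (sub_neg.2 (etaThreshold_lt_twelve hz0 hz)), abs_of_pos hz0]
    linarith

lemma continuousOn_etaThreshold : ContinuousOn etaThreshold (Iic 1) := by
  intro z hz
  refine ContinuousAt.continuousWithinAt ?_
  rcases lt_trichotomy z 0 with hz0 | rfl | hz0
  · have hQ := mul_cosh_sub_sinh_pos (pi_mul_sqrt_pos (neg_pos.2 hz0))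
    refine ((hasDerivAt_hypThreshold hQ.ne').continuousAt.comp
      (f := fun y => π * √(-y)) (by fun_prop)).congr ?_
    filter_upwards [eventually_lt_nhds hz0] with y hy
    exact (etaThreshold_of_neg hy).symm
  · refine continuousAt_of_locally_lipschitz one_pos (2 * π ^ 2) fun y hy => ?_
    rw [Real.dist_0_eq_abs] at hy
    rw [Real.dist_0_eq_abs, etaThreshold_zero, Real.dist_eq]
    exact abs_etaThreshold_sub_twelve_le (lt_of_abs_lt hy)
  · have hP := sin_sub_mul_cos_pos (pi_mul_sqrt_pos hz0)
      (mul_le_of_le_one_right pi_pos.le (sqrt_le_one.2 hz))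
    refine ((hasDerivAt_trigThreshold hP.ne').continuousAt.comp
      (f := fun y => π * √y) (by fun_prop)).congr ?_
    filter_upwards [eventually_gt_nhds hz0] with y hy
    exact (etaThreshold_of_pos hy).symm

lemma exists_etaThreshold_eq {c : ℝ} (hc : 0 < c) : ∃ z < 1, etaThreshold z = c := by
  have hz : -(c / π) ^ 2 < 0 := neg_neg_of_pos (by positivity)
  have hlarge : c < etaThreshold (-(c / π) ^ 2) := by
    rw [etaThreshold_of_neg hz, neg_neg, sqrt_sq (by positivity), mul_div_cancel₀ _ pi_ne_zero]
    exact self_lt_hypThreshold hc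
  obtain ⟨z, hz1, hzc⟩ := intermediate_value_Icc' (hz.trans one_pos).le
    (continuousOn_etaThreshold.mono Icc_subset_Iic_self)
    ⟨etaThreshold_one.le.trans hc.le, hlarge.le⟩
  refine ⟨z, hz1.2.lt_of_ne ?_, hzc⟩
  rintro rfl
  exact hc.ne' (hzc.symm.trans etaThreshold_one)

section eta

variable (γ : ℝ) {z : ℝ}

lemma eta_of_pos (hz : 0 < z) : eta γ z = γ * sin (π * √z) / √z + 4 * cos (π * √z) :=
  if_pos hz

lemma eta_zero : eta γ 0 = γ * π + 4 := by simp [eta]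

lemma eta_of_neg (hz : z < 0) :
    eta γ z = γ * sinh (π * √(-z)) / √(-z) + 4 * cosh (π * √(-z)) := by
  rw [eta, if_neg hz.not_gt, if_neg hz.ne]

lemma continuous_eta : Continuous (eta γ) := by
  have h : eta γ = fun z => if z ≤ 0
      then γ * π * dslope sinh 0 (π * √(-z)) + 4 * cosh (π * √(-z))
      else γ * π * sinc (π * √z) + 4 * cos (π * √z) := by
    funext z
    rcases lt_trichotomy z 0 with hz | rfl | hz
    · have hs := pi_mul_sqrt_pos (neg_pos.2 hz)
      have := (sqrt_pos.2 (neg_pos.2 hz)).ne'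
      rw [eta_of_neg γ hz, if_pos hz.le, dslope_of_ne _ hs.ne', slope_def_field, sinh_zero,
        sub_zero, sub_zero]
      field_simp
    · simp [eta_zero]
    · have hs := pi_mul_sqrt_pos hz
      rw [eta_of_pos γ hz, if_neg hz.not_ge, sinc_of_ne_zero hs.ne']
      field_simp
  rw [h]
  refine Continuous.if_le ((continuous_const.mul (continuous_dslope_sinh.comp (by fun_prop))).add
    (by fun_prop)) (by fun_prop) continuous_id continuous_const fun z hz => ?_
  simp [hz]

lemma exists_pos_hasDerivAt_eta_of_pos (hz : 0 < z) (hz1 : z < 1) :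
    ∃ k > 0, HasDerivAt (eta γ) (k * (-γ * π - etaThreshold z)) z := by
  set t := π * √z with ht
  have ht0 : 0 < t := pi_mul_sqrt_pos hz
  have hsz : 0 < √z := sqrt_pos.2 hz
  have hP := sin_sub_mul_cos_pos ht0 (pi_mul_sqrt_lt_pi hz1).le
  have hr : HasDerivAt (fun y => π * √y) (π * (1 / (2 * √z))) z :=
    (hasDerivAt_sqrt hz.ne').const_mul π
  have hg : HasDerivAt (fun t => γ * π * sin t / t + 4 * cos t)
      ((γ * π * cos t * t - γ * π * sin t * 1) / t ^ 2 + 4 * -sin t) t :=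
    (((hasDerivAt_sin t).const_mul (γ * π)).fun_div (hasDerivAt_id' t) ht0.ne').fun_add
      ((hasDerivAt_cos t).const_mul 4)
  have heq : eta γ =ᶠ[𝓝 z] (fun t => γ * π * sin t / t + 4 * cos t) ∘ fun y => π * √y := by
    filter_upwards [eventually_gt_nhds hz] with y hy
    have := (sqrt_pos.2 hy).ne'
    rw [eta_of_pos γ hy, Function.comp_apply]
    field_simp
  refine ⟨(sin t - t * cos t) / t ^ 2 * (π / (2 * √z)), by positivity,
    ((hg.comp z hr).congr_of_eventuallyEq heq).congr_deriv ?_⟩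
  rw [etaThreshold_of_pos hz, ← ht, trigThreshold]
  generalize hPdef : sin t - t * cos t = P at hP ⊢
  field_simp
  rw [← hPdef]
  ring

lemma exists_pos_hasDerivAt_eta_of_neg (hz : z < 0) :
    ∃ k > 0, HasDerivAt (eta γ) (k * (-γ * π - etaThreshold z)) z := by
  set s := π * √(-z) with hs
  have hs0 : 0 < s := pi_mul_sqrt_pos (neg_pos.2 hz)
  have hsz : 0 < √(-z) := sqrt_pos.2 (neg_pos.2 hz)
  have hQ := mul_cosh_sub_sinh_pos hs0
  have hr : HasDerivAt (fun y => π * √(-y)) (π * (1 / (2 * √(-z)) * -1)) z :=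
    ((hasDerivAt_sqrt (neg_pos.2 hz).ne').comp z (hasDerivAt_neg' z)).const_mul π
  have hh : HasDerivAt (fun s => γ * π * sinh s / s + 4 * cosh s)
      ((γ * π * cosh s * s - γ * π * sinh s * 1) / s ^ 2 + 4 * sinh s) s :=
    (((hasDerivAt_sinh s).const_mul (γ * π)).fun_div (hasDerivAt_id' s) hs0.ne').fun_add
      ((hasDerivAt_cosh s).const_mul 4)
  have heq :
      eta γ =ᶠ[𝓝 z] (fun s => γ * π * sinh s / s + 4 * cosh s) ∘ fun y => π * √(-y) := by
    filter_upwards [eventually_lt_nhds hz] with y hy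
    have := (sqrt_pos.2 (neg_pos.2 hy)).ne'
    rw [eta_of_neg γ hy, Function.comp_apply]
    field_simp
  refine ⟨(s * cosh s - sinh s) / s ^ 2 * (π / (2 * √(-z))), by positivity,
    ((hh.comp z hr).congr_of_eventuallyEq heq).congr_deriv ?_⟩
  rw [etaThreshold_of_neg hz, ← hs, hypThreshold]
  generalize hQdef : s * cosh s - sinh s = Q at hQ ⊢
  field_simp
  rw [← hQdef]
  ring

lemma exists_pos_hasDerivAt_eta (hz0 : z ≠ 0) (hz1 : z < 1) :
    ∃ k > 0, HasDerivAt (eta γ) (k * (-γ * π - etaThreshold z)) z :=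
  hz0.lt_or_gt.elim (exists_pos_hasDerivAt_eta_of_neg γ) (exists_pos_hasDerivAt_eta_of_pos γ · hz1)

variable {γ}

lemma deriv_eta_pos (hz0 : z ≠ 0) (hz1 : z < 1) (h : etaThreshold z < -γ * π) :
    0 < deriv (eta γ) z := by
  obtain ⟨k, hk, hd⟩ := exists_pos_hasDerivAt_eta γ hz0 hz1
  rw [hd.deriv]
  exact mul_pos hk (sub_pos.2 h)

lemma deriv_eta_neg (hz0 : z ≠ 0) (hz1 : z < 1) (h : -γ * π < etaThreshold z) :
    deriv (eta γ) z < 0 := by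
  obtain ⟨k, hk, hd⟩ := exists_pos_hasDerivAt_eta γ hz0 hz1
  rw [hd.deriv]
  exact mul_neg_of_pos_of_neg hk (sub_neg.2 h)

end eta

/-- For `γ < 0` there is a unique `z₀ ∈ (−∞, 1)` such that `η` is strictly
decreasing on `(−∞, z₀]` and strictly increasing on `[z₀, 1)`; moreover `z₀ ∈ (0, 1)` if
`−12/π < γ < 0`, `z₀ = 0` if `γ = −12/π`, and `z₀ < 0` if `γ < −12/π`. -/
theorem eta_unique_minimum_of_neg (γ : ℝ) (hγ : γ < 0) :
    ∃ z₀ : ℝ, z₀ < 1 ∧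
      StrictAntiOn (eta γ) (Set.Iic z₀) ∧
      StrictMonoOn (eta γ) (Set.Ico z₀ 1) ∧
      (∀ w : ℝ, w < 1 → StrictAntiOn (eta γ) (Set.Iic w) →
        StrictMonoOn (eta γ) (Set.Ico w 1) → w = z₀) ∧
      (-12 / π < γ → 0 < z₀ ∧ z₀ < 1) ∧
      (γ = -12 / π → z₀ = 0) ∧
      (γ < -12 / π → z₀ < 0) := by
  obtain ⟨z₀, hz₀1, hz₀⟩ := exists_etaThreshold_eq (mul_pos (neg_pos.2 hγ) pi_pos)
  have hanti : StrictAntiOn (eta γ) (Iic z₀) :=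
    strictAntiOn_of_deriv_neg_of_ne (convex_Iic z₀) (continuous_eta γ).continuousOn
      fun z hz hz0 => by
        rw [interior_Iic] at hz
        exact deriv_eta_neg hz0 (hz.trans hz₀1)
          (hz₀ ▸ etaThreshold_strictAntiOn (hz.trans hz₀1) hz₀1 hz)
  have hmono : StrictMonoOn (eta γ) (Ico z₀ 1) :=
    strictMonoOn_of_deriv_pos_of_ne (convex_Ico z₀ 1) (continuous_eta γ).continuousOn
      fun z hz hz0 => by
        rw [interior_Ico] at hz
        exact deriv_eta_pos hz0 hz.2 (hz₀ ▸ etaThreshold_strictAntiOn hz₀1 hz.2 hz.1)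
  have h0 : (0 : ℝ) ∈ Iio 1 := mem_Iio.2 one_pos
  refine ⟨z₀, hz₀1, hanti, hmono, fun w hw hwa hwm => le_antisymm
    (le_of_strictAntiOn_Iic_of_strictMonoOn_Ico hwa hmono hw)
    (le_of_strictAntiOn_Iic_of_strictMonoOn_Ico hanti hwm hz₀1),
    fun h => ⟨?_, hz₀1⟩, fun h => ?_, fun h => ?_⟩
  · rw [div_lt_iff₀ pi_pos] at h
    exact (etaThreshold_strictAntiOn.lt_iff_gt hz₀1 h0).1
      (by rw [hz₀, etaThreshold_zero]; linarith)
  · exact etaThreshold_strictAntiOn.injOn hz₀1 h0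
      (by rw [hz₀, etaThreshold_zero, h]; field_simp)
  · rw [lt_div_iff₀ pi_pos] at h
    exact (etaThreshold_strictAntiOn.lt_iff_gt h0 hz₀1).1
      (by rw [hz₀, etaThreshold_zero]; linarith)
end

section
/- For γ ∈ ℝ and integer n ≥ 1, let I_n = {z ∈ (n², (n+1)²) : |η(z)| ≤ 4}. Then: if γ > 0 there exists a_n with n² < a_n < (n+1)² such that I_n = [a_n, (n+1)²); if γ < 0 there exists b_n with n² < b_n < (n+1)² such that I_n = (n², b_n]; and if γ = 0 then I_n = (n², (n+1)²). In particular, for γ ≠ 0 the sets I_n and I_{n+1} are separated by a gap of positive length. -/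
/-!
Write `s = √z ∈ (n, n + 1)` and `u = π (s - n) / 2 ∈ (0, π / 2)`. Then
`η(z) = ± (γ sin 2u / s + 4 cos 2u)`, and the double-angle formulas turn `|η(z)| ≤ 4` into the
two conditions `γ ≤ 4 s tan u` and `-4 ≤ γ tan u / s`. Both `s tan u` and `tan u / s` increase
strictly from `0` to `∞` on `(n, n + 1)` (for the second, the derivative is positive because
`sin 2u < 2u ≤ π s`). Hence for `γ > 0` only the first condition is active and it cuts out a final
segment of the band, for `γ < 0` only the second one is active and it cuts out an initial segment,
and for `γ = 0` neither is.
-/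

open Real

/-- `I_m = {z ∈ (m², (m+1)²) : |η(z)| ≤ 4}`. -/
noncomputable def bandSet (γ : ℝ) (m : ℕ) : Set ℝ :=
  {z : ℝ | z ∈ Set.Ioo ((m : ℝ) ^ 2) (((m : ℝ) + 1) ^ 2) ∧ |eta γ z| ≤ 4}

open Real Set Filter Topology

theorem exists_eq_of_continuousOn_Ico_of_tendsto_atTop {f : ℝ → ℝ} {a b y : ℝ} (hab : a < b)
    (hf : ContinuousOn f (Ico a b)) (ha : f a < y) (hb : Tendsto f (𝓝[<] b) atTop) :
    ∃ x ∈ Ioo a b, f x = y := by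
  obtain ⟨w, hyw, haw, hwb⟩ := ((hb.eventually_ge_atTop y).and (Ioo_mem_nhdsLT hab)).exists
  obtain ⟨x, ⟨hax, hxw⟩, rfl⟩ :=
    intermediate_value_Ioc haw.le (hf.mono (Icc_subset_Ico_right hwb)) ⟨ha, hyw⟩
  exact ⟨x, ⟨hax, hxw.trans_lt hwb⟩, rfl⟩

section SqrtReparametrization

variable {f : ℝ → ℝ} {a b x z : ℝ}

theorem sqrt_mem_Ioo_of_mem_Ioo_sq (ha : 0 ≤ a) (hb : 0 ≤ b) (hz : z ∈ Ioo (a ^ 2) (b ^ 2)) :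
    √z ∈ Ioo a b := by
  refine ⟨(lt_sqrt ha).2 hz.1, ?_⟩
  simpa only [sqrt_sq hb] using sqrt_lt_sqrt (by nlinarith [hz.1]) hz.2

theorem setOf_le_comp_sqrt_eq_Ico (ha : 0 ≤ a) (hf : StrictMonoOn f (Ioo a b))
    (hx : x ∈ Ioo a b) :
    {z | z ∈ Ioo (a ^ 2) (b ^ 2) ∧ f x ≤ f √z} = Ico (x ^ 2) (b ^ 2) := by
  have hx0 : 0 ≤ x := ha.trans hx.1.le
  have hb : 0 ≤ b := hx0.trans hx.2.le
  ext z
  constructor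
  · rintro ⟨hz, hfz⟩
    have hxz := (hf.le_iff_le hx (sqrt_mem_Ioo_of_mem_Ioo_sq ha hb hz)).1 hfz
    exact ⟨(le_sqrt hx0 (by nlinarith [hz.1])).1 hxz, hz.2⟩
  · rintro ⟨hxz, hzb⟩
    have hz : z ∈ Ioo (a ^ 2) (b ^ 2) := ⟨by nlinarith [hx.1], hzb⟩
    exact ⟨hz, (hf.le_iff_le hx (sqrt_mem_Ioo_of_mem_Ioo_sq ha hb hz)).2
      ((le_sqrt hx0 (by nlinarith)).2 hxz)⟩

theorem setOf_comp_sqrt_le_eq_Ioc (ha : 0 ≤ a) (hf : StrictMonoOn f (Ioo a b))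
    (hx : x ∈ Ioo a b) :
    {z | z ∈ Ioo (a ^ 2) (b ^ 2) ∧ f √z ≤ f x} = Ioc (a ^ 2) (x ^ 2) := by
  have hx0 : 0 ≤ x := ha.trans hx.1.le
  have hb : 0 ≤ b := hx0.trans hx.2.le
  ext z
  constructor
  · rintro ⟨hz, hfz⟩
    have hzx := (hf.le_iff_le (sqrt_mem_Ioo_of_mem_Ioo_sq ha hb hz) hx).1 hfz
    exact ⟨hz.1, (sqrt_le_left hx0).1 hzx⟩
  · rintro ⟨haz, hzx⟩
    have hz : z ∈ Ioo (a ^ 2) (b ^ 2) := ⟨haz, by nlinarith [hx.2]⟩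
    exact ⟨hz, (hf.le_iff_le (sqrt_mem_Ioo_of_mem_Ioo_sq ha hb hz) hx).2
      ((sqrt_le_left hx0).2 hzx)⟩

end SqrtReparametrization

noncomputable def tanPhase (c s : ℝ) : ℝ := tan (π * (s - c) / 2)

section TanPhase

variable {c s : ℝ}

theorem mapsTo_pi_mul_sub_div_two :
    MapsTo (fun s => π * (s - c) / 2) (Ioo (c - 1) (c + 1)) (Ioo (-(π / 2)) (π / 2)) :=
  fun _ hs => ⟨by nlinarith [pi_pos, hs.1], by nlinarith [pi_pos, hs.2]⟩

theorem pi_mul_sub_div_two_mem_Ioo (hs : s ∈ Ioo c (c + 1)) :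
    π * (s - c) / 2 ∈ Ioo 0 (π / 2) :=
  ⟨by nlinarith [pi_pos, hs.1], by nlinarith [pi_pos, hs.2]⟩

theorem tanPhase_self : tanPhase c c = 0 := by simp [tanPhase]

theorem tanPhase_pos (hs : s ∈ Ioo c (c + 1)) : 0 < tanPhase c s :=
  tan_pos_of_pos_of_lt_pi_div_two (pi_mul_sub_div_two_mem_Ioo hs).1
    (pi_mul_sub_div_two_mem_Ioo hs).2

theorem continuousOn_tanPhase : ContinuousOn (tanPhase c) (Ioo (c - 1) (c + 1)) :=
  continuousOn_tan_Ioo.comp (by fun_prop) mapsTo_pi_mul_sub_div_two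

theorem continuousOn_tanPhase_Ico : ContinuousOn (tanPhase c) (Ico c (c + 1)) :=
  continuousOn_tanPhase.mono (Ico_subset_Ioo_left (sub_one_lt c))

theorem strictMonoOn_tanPhase : StrictMonoOn (tanPhase c) (Ioo (c - 1) (c + 1)) :=
  strictMonoOn_tan.comp (fun _ _ _ _ h => by gcongr) mapsTo_pi_mul_sub_div_two

theorem tendsto_tanPhase_atTop : Tendsto (tanPhase c) (𝓝[<] (c + 1)) atTop := by
  have hmaps : MapsTo (fun s => π * (s - c) / 2) (Iio (c + 1)) (Iio (π / 2)) :=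
    fun s (hs : s < c + 1) => show π * (s - c) / 2 < π / 2 by nlinarith [pi_pos]
  have hcont : Continuous fun s => π * (s - c) / 2 := by fun_prop
  have hphase := (hcont.continuousWithinAt (s := Iio (c + 1)) (x := c + 1)).tendsto_nhdsWithin hmaps
  rw [show π * (c + 1 - c) / 2 = π / 2 by ring] at hphase
  exact tendsto_tan_pi_div_two.comp hphase

theorem hasDerivAt_tanPhase (hs : s ∈ Ioo (c - 1) (c + 1)) :
    HasDerivAt (tanPhase c) (π / 2 / cos (π * (s - c) / 2) ^ 2) s := by
  have hcos : cos (π * (s - c) / 2) ≠ 0 := (cos_pos_of_mem_Ioo (mapsTo_pi_mul_sub_div_two hs)).ne'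
  have hphase : HasDerivAt (fun s => π * (s - c) / 2) (π / 2) s := by
    simpa using (((hasDerivAt_id s).sub_const c).const_mul π).div_const 2
  exact ((hasDerivAt_tan hcos).comp s hphase).congr_deriv (by ring)

theorem strictMonoOn_mul_tanPhase (hc : 0 ≤ c) :
    StrictMonoOn (fun s => 4 * s * tanPhase c s) (Ioo c (c + 1)) := by
  intro s hs t ht hst
  have htan : tanPhase c s < tanPhase c t :=
    strictMonoOn_tanPhase ⟨by linarith [hs.1], hs.2⟩ ⟨by linarith [ht.1], ht.2⟩ hst
  have hs_tan := tanPhase_pos hs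
  have hs0 := hc.trans_lt hs.1
  dsimp only
  nlinarith

theorem continuousOn_mul_tanPhase : ContinuousOn (fun s => 4 * s * tanPhase c s) (Ico c (c + 1)) :=
  (continuousOn_const.mul continuousOn_id).mul continuousOn_tanPhase_Ico

theorem tendsto_mul_tanPhase_atTop (hc : 0 ≤ c) :
    Tendsto (fun s => 4 * s * tanPhase c s) (𝓝[<] (c + 1)) atTop := by
  have h : Tendsto (fun s : ℝ => 4 * s) (𝓝[<] (c + 1)) (𝓝 (4 * (c + 1))) :=
    tendsto_nhdsWithin_of_tendsto_nhds ((continuous_const.mul continuous_id).tendsto _)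
  exact h.pos_mul_atTop (by linarith) tendsto_tanPhase_atTop

theorem strictMonoOn_tanPhase_div (hc : 0 ≤ c) :
    StrictMonoOn (fun s => tanPhase c s / s) (Ioo c (c + 1)) := by
  have hderiv : ∀ s ∈ Ioo c (c + 1), HasDerivAt (fun s => tanPhase c s / s)
      ((π / 2 / cos (π * (s - c) / 2) ^ 2 * s - tanPhase c s * 1) / s ^ 2) s := fun s hs =>
    (hasDerivAt_tanPhase ⟨by linarith [hs.1], hs.2⟩).div (hasDerivAt_id s) (by linarith [hs.1])
  refine strictMonoOn_of_deriv_pos (convex_Ioo _ _)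
    (fun s hs => (hderiv s hs).continuousAt.continuousWithinAt) fun s hs => ?_
  rw [interior_Ioo] at hs
  rw [(hderiv s hs).deriv]
  obtain ⟨hθ, hθπ⟩ := pi_mul_sub_div_two_mem_Ioo hs
  have hs0 : 0 < s := hc.trans_lt hs.1
  set θ := π * (s - c) / 2 with hθdef
  have hcos : 0 < cos θ := cos_pos_of_mem_Ioo ⟨by linarith, hθπ⟩
  have hsincos : sin θ * cos θ < π / 2 * s := by
    have h2θ : 2 * θ ≤ π * s := by rw [hθdef]; nlinarith [pi_pos]
    have hsin := sin_lt (by positivity : 0 < 2 * θ)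
    rw [sin_two_mul] at hsin
    linarith
  have hnum : 0 < π / 2 / cos θ ^ 2 * s - tanPhase c s * 1 := by
    rw [tanPhase, tan_eq_sin_div_cos, mul_one, div_mul_eq_mul_div,
      div_sub_div _ _ (by positivity) hcos.ne']
    apply div_pos _ (by positivity)
    nlinarith
  exact div_pos hnum (by positivity)

theorem continuousOn_tanPhase_div (hc : 0 < c) :
    ContinuousOn (fun s => tanPhase c s / s) (Ico c (c + 1)) :=
  continuousOn_tanPhase_Ico.div continuousOn_id fun _ hs => (hc.trans_le hs.1).ne'

theorem tendsto_tanPhase_div_atTop (hc : 0 ≤ c) :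
    Tendsto (fun s => tanPhase c s / s) (𝓝[<] (c + 1)) atTop := by
  have hc1 : 0 < c + 1 := by linarith
  have hinv : Tendsto (fun s : ℝ => s⁻¹) (𝓝[<] (c + 1)) (𝓝 (c + 1)⁻¹) :=
    tendsto_nhdsWithin_of_tendsto_nhds (tendsto_inv₀ hc1.ne')
  simpa only [div_eq_mul_inv] using tendsto_tanPhase_atTop.atTop_mul_pos (inv_pos.2 hc1) hinv

end TanPhase

theorem abs_le_four_iff_tan {γ s u : ℝ} (hs : 0 < s) (hu : u ∈ Ioo 0 (π / 2)) :
    |γ * sin (2 * u) / s + 4 * cos (2 * u)| ≤ 4 ↔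
      γ ≤ 4 * s * tan u ∧ -4 ≤ γ * (tan u / s) := by
  have hsin : 0 < sin u := sin_pos_of_pos_of_lt_pi hu.1 (by linarith [hu.2, pi_pos])
  have hcos : 0 < cos u := cos_pos_of_mem_Ioo ⟨by linarith [hu.1, pi_pos], hu.2⟩
  have hupper : 4 - (γ * sin (2 * u) / s + 4 * cos (2 * u)) =
      2 * sin u * cos u / s * (4 * s * tan u - γ) := by
    rw [sin_two_mul, cos_two_mul, tan_eq_sin_div_cos]
    field_simp
    nlinarith [sin_sq_add_cos_sq u]
  have hlower : γ * sin (2 * u) / s + 4 * cos (2 * u) + 4 =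
      2 * cos u ^ 2 * (γ * (tan u / s) + 4) := by
    rw [sin_two_mul, cos_two_mul, tan_eq_sin_div_cos]
    field_simp
    ring
  rw [abs_le, and_comm]
  refine and_congr ?_ ?_
  · rw [← sub_nonneg, hupper, mul_nonneg_iff_of_pos_left (by positivity), sub_nonneg]
  · rw [neg_le_iff_add_nonneg, hlower, mul_nonneg_iff_of_pos_left (by positivity),
      neg_le_iff_add_nonneg]

theorem abs_eta_eq (γ : ℝ) (n : ℕ) {z : ℝ} (hz : 0 < z) :
    |eta γ z| =
      |γ * sin (2 * (π * (√z - n) / 2)) / √z + 4 * cos (2 * (π * (√z - n) / 2))| := by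
  have hπ : π * √z = 2 * (π * (√z - n) / 2) + n * π := by ring
  have hsign (a b : ℝ) : γ * ((-1) ^ n * a) / √z + 4 * ((-1) ^ n * b) =
      (-1) ^ n * (γ * a / √z + 4 * b) := by ring
  rw [eta, if_pos hz, hπ, sin_add_nat_mul_pi, cos_add_nat_mul_pi, hsign, abs_mul,
    abs_neg_one_pow, one_mul]

theorem mem_bandSet_iff {γ z : ℝ} {n : ℕ} :
    z ∈ bandSet γ n ↔ z ∈ Ioo ((n : ℝ) ^ 2) (((n : ℝ) + 1) ^ 2) ∧
      (γ ≤ 4 * √z * tanPhase n √z ∧ -4 ≤ γ * (tanPhase n √z / √z)) := by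
  refine and_congr_right fun hz => ?_
  have hs := sqrt_mem_Ioo_of_mem_Ioo_sq (Nat.cast_nonneg n) (by positivity) hz
  rw [abs_eta_eq γ n (sqrt_pos.1 ((Nat.cast_nonneg n).trans_lt hs.1))]
  exact abs_le_four_iff_tan ((Nat.cast_nonneg n).trans_lt hs.1) (pi_mul_sub_div_two_mem_Ioo hs)

theorem bandSet_eq_Ico_of_pos {γ : ℝ} (hγ : 0 < γ) (n : ℕ) :
    ∃ a : ℝ, (n : ℝ) ^ 2 < a ∧ a < ((n : ℝ) + 1) ^ 2 ∧
      bandSet γ n = Ico a (((n : ℝ) + 1) ^ 2) := by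
  have hn := Nat.cast_nonneg (α := ℝ) n
  obtain ⟨x, hx, hγx⟩ := exists_eq_of_continuousOn_Ico_of_tendsto_atTop (lt_add_one (n : ℝ))
    continuousOn_mul_tanPhase (by simpa [tanPhase_self] using hγ) (tendsto_mul_tanPhase_atTop hn)
  refine ⟨x ^ 2, by nlinarith [hx.1], by nlinarith [hx.1, hx.2], ?_⟩
  rw [← setOf_le_comp_sqrt_eq_Ico hn (strictMonoOn_mul_tanPhase hn) hx, hγx]
  ext z
  refine mem_bandSet_iff.trans (and_congr_right fun hz => and_iff_left ?_)
  have hs := sqrt_mem_Ioo_of_mem_Ioo_sq hn (by positivity) hz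
  have htan := div_pos (tanPhase_pos hs) (hn.trans_lt hs.1)
  nlinarith

theorem bandSet_eq_Ioc_of_neg {γ : ℝ} (hγ : γ < 0) {n : ℕ} (hn : 0 < n) :
    ∃ b : ℝ, (n : ℝ) ^ 2 < b ∧ b < ((n : ℝ) + 1) ^ 2 ∧
      bandSet γ n = Ioc ((n : ℝ) ^ 2) b := by
  have hn0 := Nat.cast_nonneg (α := ℝ) n
  obtain ⟨x, hx, hγx⟩ := exists_eq_of_continuousOn_Ico_of_tendsto_atTop (lt_add_one (n : ℝ))
    (continuousOn_tanPhase_div (Nat.cast_pos.2 hn)) (y := -4 / γ)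
    (by simpa [tanPhase_self] using div_pos_of_neg_of_neg (by norm_num) hγ)
    (tendsto_tanPhase_div_atTop hn0)
  refine ⟨x ^ 2, by nlinarith [hx.1], by nlinarith [hx.1, hx.2], ?_⟩
  rw [← setOf_comp_sqrt_le_eq_Ioc hn0 (strictMonoOn_tanPhase_div hn0) hx, hγx]
  ext z
  refine mem_bandSet_iff.trans (and_congr_right fun hz => ?_)
  have hs := sqrt_mem_Ioo_of_mem_Ioo_sq hn0 (by positivity) hz
  have htan := mul_pos (hn0.trans_lt hs.1) (tanPhase_pos hs)
  rw [and_iff_right (by nlinarith), le_div_iff_of_neg hγ, mul_comm]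

theorem bandSet_zero (n : ℕ) : bandSet 0 n = Ioo ((n : ℝ) ^ 2) (((n : ℝ) + 1) ^ 2) := by
  ext z
  refine mem_bandSet_iff.trans (and_iff_left_of_imp fun hz => ?_)
  have hs := sqrt_mem_Ioo_of_mem_Ioo_sq (Nat.cast_nonneg n) (by positivity) hz
  have htan := mul_pos ((Nat.cast_nonneg n).trans_lt hs.1) (tanPhase_pos hs)
  constructor <;> linarith

/-- For `n ≥ 1`: if `γ > 0` then `I_n = [a_n, (n+1)²)` with
`n² < a_n < (n+1)²`; if `γ < 0` then `I_n = (n², b_n]` with `n² < b_n < (n+1)²`; if `γ = 0`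
then `I_n = (n², (n+1)²)`. In particular, for `γ ≠ 0` the sets `I_n` and `I_{n+1}` are
separated by a gap of positive length. -/
theorem bandSet_structure (γ : ℝ) (n : ℕ) (hn : 1 ≤ n) :
    (0 < γ → ∃ a : ℝ, (n : ℝ) ^ 2 < a ∧ a < ((n : ℝ) + 1) ^ 2 ∧
      bandSet γ n = Set.Ico a (((n : ℝ) + 1) ^ 2)) ∧
    (γ < 0 → ∃ b : ℝ, (n : ℝ) ^ 2 < b ∧ b < ((n : ℝ) + 1) ^ 2 ∧
      bandSet γ n = Set.Ioc ((n : ℝ) ^ 2) b) ∧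
    (γ = 0 → bandSet γ n = Set.Ioo ((n : ℝ) ^ 2) (((n : ℝ) + 1) ^ 2)) ∧
    (γ ≠ 0 → ∃ c d : ℝ, c < d ∧
      (∀ x ∈ bandSet γ n, x ≤ c) ∧ (∀ y ∈ bandSet γ (n + 1), d ≤ y)) := by
  refine ⟨fun hγ => bandSet_eq_Ico_of_pos hγ n, fun hγ => bandSet_eq_Ioc_of_neg hγ hn,
    fun hγ => hγ ▸ bandSet_zero n, fun hγ => ?_⟩
  have hcast : ((n + 1 : ℕ) : ℝ) = n + 1 := Nat.cast_succ n
  rcases hγ.lt_or_gt with hγ | hγ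
  · obtain ⟨b, -, hb, hband⟩ := bandSet_eq_Ioc_of_neg hγ hn
    refine ⟨b, ((n : ℝ) + 1) ^ 2, hb, fun x hx => (hband ▸ hx).2, fun y hy => ?_⟩
    exact (hcast ▸ hy.1.1).le
  · obtain ⟨a, ha, -, hband⟩ := bandSet_eq_Ico_of_pos hγ (n + 1)
    refine ⟨((n : ℝ) + 1) ^ 2, a, hcast ▸ ha, fun x hx => hx.1.2.le, fun y hy => (hband ▸ hy).1⟩
end

section
/- For γ ∈ ℝ, let I₀ = {z ∈ (−∞, 1) : |η(z)| ≤ 4}. Then: if γ > 0, I₀ = [a₀, 1) for some a₀ with 0 < a₀ < 1; if γ = 0, I₀ = [0, 1); if −8/π < γ < 0, I₀ = [a₀, b₀] with a₀ < 0 < b₀ < 1; if γ = −8/π, I₀ = [a₀, 0] with a₀ < 0; and if γ < −8/π, I₀ = [a₀, b₀] with a₀ < b₀ < 0. In particular 0 ∈ I₀ if and only if −8/π ≤ γ ≤ 0. -/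
open Real

/-- `I₀ = {z ∈ (−∞, 1) : |η(z)| ≤ 4}`. -/
noncomputable def bandSetZero (γ : ℝ) : Set ℝ :=
  {z : ℝ | z < 1 ∧ |eta γ z| ≤ 4}

/-!
Put `x = π√z/2` (and `y = π√(-z)/2` when `z < 0`) and `c = γπ/8`. The double-angle formulas
factor `4 - η` and `η + 4`, turning `η(z) ≤ 4` into `c ≤ P z` and `-4 ≤ η(z)` into `-c ≤ Q z`,
where `P` is `x tan x` (resp. `-y tanh y`) and `Q` is `x cot x` (resp. `y coth y`). On `(-∞, 1)`,
`P` increases strictly from `-∞` to `+∞` with `P 0 = 0`, and `Q` decreases strictly from `+∞`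
to `0` with `Q 0 = 1`. Hence `I₀ = [P⁻¹ c, 1)` for `c ≥ 0` and `I₀ = [P⁻¹ c, Q⁻¹ (-c)]` for
`c < 0`; comparing `-c` with `Q 0 = 1` locates the right end point, and `P + Q > 0` makes the
interval nondegenerate.
-/

open Set Filter Topology

theorem strictMonoOn_of_inter_Iio_of_inter_Ioi {α β : Type*} [LinearOrder α] [Preorder β]
    {f : α → β} {s : Set α} {p : α} (h₁ : StrictMonoOn f (s ∩ Iio p))
    (h₂ : StrictMonoOn f (s ∩ Ioi p)) (hlt : ∀ x ∈ s, x < p → f x < f p)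
    (hgt : ∀ x ∈ s, p < x → f p < f x) : StrictMonoOn f s := by
  intro x hx y hy hxy
  rcases lt_trichotomy y p with hyp | rfl | hyp
  · exact h₁ ⟨hx, hxy.trans hyp⟩ ⟨hy, hyp⟩ hxy
  · exact hlt x hx hxy
  · rcases lt_trichotomy x p with hxp | rfl | hxp
    · exact (hlt x hx hxp).trans (hgt y hy hyp)
    · exact hgt y hy hyp
    · exact h₂ ⟨hx, hxp⟩ ⟨hy, hyp⟩ hxy

namespace BandSet

noncomputable def mulTan (x : ℝ) : ℝ := x * tan x

noncomputable def mulCot (x : ℝ) : ℝ := x * cos x / sin x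

noncomputable def mulTanh (x : ℝ) : ℝ := x * sinh x / cosh x

noncomputable def mulCoth (x : ℝ) : ℝ := x * cosh x / sinh x

theorem mulTan_pos {x : ℝ} (h₀ : 0 < x) (h₁ : x < π / 2) : 0 < mulTan x :=
  mul_pos h₀ (tan_pos_of_pos_of_lt_pi_div_two h₀ h₁)

theorem mulCot_pos {x : ℝ} (h₀ : 0 < x) (h₁ : x < π / 2) : 0 < mulCot x := by
  have := sin_pos_of_pos_of_lt_pi h₀ (by linarith [pi_pos])
  have := cos_pos_of_mem_Ioo ⟨by linarith, h₁⟩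
  unfold mulCot; positivity

theorem mulCot_lt_one {x : ℝ} (h₀ : 0 < x) (h₁ : x < π / 2) : mulCot x < 1 := by
  have htan := lt_tan h₀ h₁
  rw [tan_eq_sin_div_cos, lt_div_iff₀ (cos_pos_of_mem_Ioo ⟨by linarith, h₁⟩)] at htan
  rwa [mulCot, div_lt_one (sin_pos_of_pos_of_lt_pi h₀ (by linarith [pi_pos]))]

theorem mulTanh_pos {x : ℝ} (hx : 0 < x) : 0 < mulTanh x := by
  have := sinh_pos_iff.2 hx
  have := cosh_pos x
  unfold mulTanh; positivity

theorem one_lt_mulCoth {x : ℝ} (hx : 0 < x) : 1 < mulCoth x := by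
  obtain ⟨c, hc, hslope⟩ := exists_hasDerivAt_eq_slope sinh cosh hx
    continuous_sinh.continuousOn fun y _ => hasDerivAt_sinh y
  have hcosh : cosh c < cosh x := by
    rw [cosh_lt_cosh, abs_of_pos hc.1, abs_of_pos hx]; exact hc.2
  rw [sinh_zero, sub_zero, sub_zero] at hslope
  rw [hslope, div_lt_iff₀ hx] at hcosh
  rw [mulCoth, one_lt_div (sinh_pos_iff.2 hx)]
  linarith

theorem mulTanh_lt_mulCoth {x : ℝ} (hx : 0 < x) : mulTanh x < mulCoth x := by
  rw [mulTanh, mulCoth, div_lt_div_iff₀ (cosh_pos x) (sinh_pos_iff.2 hx)]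
  nlinarith [cosh_sq_sub_sinh_sq x]

theorem strictMonoOn_mulTan : StrictMonoOn mulTan (Ico 0 (π / 2)) := by
  intro x hx y hy hxy
  have hmem : ∀ {t}, t ∈ Ico 0 (π / 2) → t ∈ Ioo (-(π / 2)) (π / 2) :=
    fun ht => ⟨by linarith [ht.1, pi_pos], ht.2⟩
  calc x * tan x ≤ x * tan y :=
        mul_le_mul_of_nonneg_left (strictMonoOn_tan.monotoneOn (hmem hx) (hmem hy) hxy.le) hx.1
    _ < y * tan y :=
        mul_lt_mul_of_pos_right hxy (tan_pos_of_pos_of_lt_pi_div_two (hx.1.trans_lt hxy) hy.2)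

theorem strictAntiOn_mulCot : StrictAntiOn mulCot (Ioo 0 π) := by
  have hsin : ∀ x ∈ Ioo 0 π, 0 < sin x := fun x hx => sin_pos_of_pos_of_lt_pi hx.1 hx.2
  have hderiv : ∀ x ∈ Ioo 0 π, HasDerivAt mulCot ((sin x * cos x - x) / sin x ^ 2) x := by
    intro x hx
    refine (((hasDerivAt_id' x).mul (hasDerivAt_cos x)).div (hasDerivAt_sin x)
      (hsin x hx).ne').congr_deriv ?_
    simp only [Pi.mul_apply]
    linear_combination (-x / sin x ^ 2) * Real.sin_sq_add_cos_sq x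
  refine strictAntiOn_of_hasDerivWithinAt_neg (f' := fun x => (sin x * cos x - x) / sin x ^ 2)
    (convex_Ioo 0 π) (fun x hx => (hderiv x hx).continuousAt.continuousWithinAt) ?_ ?_ <;>
    rw [interior_Ioo]
  · exact fun x hx => (hderiv x hx).hasDerivWithinAt
  · intro x hx
    have := sin_lt (show 0 < 2 * x by linarith [hx.1])
    rw [sin_two_mul] at this
    exact div_neg_of_neg_of_pos (by linarith) (pow_pos (hsin x hx) 2)

theorem strictMonoOn_mulTanh : StrictMonoOn mulTanh (Ici 0) := by
  have hderiv : ∀ x, HasDerivAt mulTanh ((sinh x * cosh x + x) / cosh x ^ 2) x := by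
    intro x
    refine (((hasDerivAt_id' x).mul (hasDerivAt_sinh x)).div (hasDerivAt_cosh x)
      (cosh_pos x).ne').congr_deriv ?_
    simp only [Pi.mul_apply]
    linear_combination (x / cosh x ^ 2) * Real.cosh_sq_sub_sinh_sq x
  refine strictMonoOn_of_hasDerivWithinAt_pos (convex_Ici 0)
    (fun x _ => (hderiv x).continuousAt.continuousWithinAt)
    (fun x _ => (hderiv x).hasDerivWithinAt) ?_
  rw [interior_Ici]
  intro x (hx : 0 < x)
  have := sinh_pos_iff.2 hx
  positivity

theorem strictMonoOn_mulCoth : StrictMonoOn mulCoth (Ioi 0) := by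
  have hderiv : ∀ x > 0, HasDerivAt mulCoth ((sinh x * cosh x - x) / sinh x ^ 2) x := by
    intro x hx
    refine (((hasDerivAt_id' x).mul (hasDerivAt_cosh x)).div (hasDerivAt_sinh x)
      (sinh_pos_iff.2 hx).ne').congr_deriv ?_
    simp only [Pi.mul_apply]
    linear_combination (-x / sinh x ^ 2) * Real.cosh_sq_sub_sinh_sq x
  refine strictMonoOn_of_hasDerivWithinAt_pos
    (f' := fun x => (sinh x * cosh x - x) / sinh x ^ 2) (convex_Ioi 0)
    (fun x hx => (hderiv x hx).continuousAt.continuousWithinAt) ?_ ?_ <;> rw [interior_Ioi]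
  · exact fun x hx => (hderiv x hx).hasDerivWithinAt
  · intro x (hx : 0 < x)
    exact div_pos (by nlinarith [self_lt_sinh_iff.2 hx, one_le_cosh x])
      (pow_pos (sinh_pos_iff.2 hx) 2)

theorem surjOn_mulTan : SurjOn mulTan (Ioo 0 (π / 2)) (Ioi 0) := by
  intro d (hd : 0 < d)
  have hlim : Tendsto mulTan (𝓝[<] (π / 2)) atTop :=
    continuousWithinAt_id.tendsto.pos_mul_atTop pi_div_two_pos tendsto_tan_pi_div_two
  obtain ⟨b, hdb, hb⟩ :=
    ((hlim.eventually_gt_atTop d).and (Ioo_mem_nhdsLT pi_div_two_pos)).exists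
  have hcont : ContinuousOn mulTan (Icc 0 b) :=
    (continuousOn_id.mul continuousOn_tan_Ioo).mono
      fun y hy => ⟨by linarith [hy.1, pi_pos], hy.2.trans_lt hb.2⟩
  obtain ⟨x, hx, rfl⟩ :=
    intermediate_value_Ioo hb.1.le hcont ⟨by simpa [mulTan] using hd, hdb⟩
  exact ⟨x, ⟨hx.1, hx.2.trans hb.2⟩, rfl⟩

theorem surjOn_mulCot : SurjOn mulCot (Ioo 0 (π / 2)) (Ioo 0 1) := by
  rintro d ⟨hd₀, hd₁⟩
  have hcos : ∀ᶠ x in 𝓝[>] 0, d < cos x := nhdsWithin_le_nhds <|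
    (continuous_cos.tendsto' 0 1 cos_zero).eventually (lt_mem_nhds hd₁)
  obtain ⟨a, hda, ha⟩ := (hcos.and (Ioo_mem_nhdsGT pi_div_two_pos)).exists
  have hsin : ∀ x ∈ Icc a (π / 2), 0 < sin x :=
    fun x hx => sin_pos_of_pos_of_lt_pi (ha.1.trans_le hx.1) (by linarith [hx.2, pi_pos])
  -- `sin a < a` gives `cos a ≤ mulCot a`
  have hcot : d < mulCot a := by
    have := sin_lt ha.1
    rw [mulCot, lt_div_iff₀ (hsin a ⟨le_rfl, ha.2.le⟩)]
    nlinarith [hsin a ⟨le_rfl, ha.2.le⟩]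
  have hcont : ContinuousOn mulCot (Icc a (π / 2)) :=
    (continuousOn_id.mul continuousOn_cos).div continuousOn_sin fun x hx => (hsin x hx).ne'
  obtain ⟨x, hx, rfl⟩ :=
    intermediate_value_Ioo' ha.2.le hcont ⟨by simpa [mulCot] using hd₀, hcot⟩
  exact ⟨x, ⟨ha.1.trans hx.1, hx.2⟩, rfl⟩

theorem surjOn_mulTanh : SurjOn mulTanh (Ioi 0) (Ioi 0) := by
  intro d (hd : 0 < d)
  -- `sinh ≥ cosh - 1` and `d + 1 < cosh (d + 1)` give `d < mulTanh (d + 1)`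
  have hb : d < mulTanh (d + 1) := by
    have hexp : cosh (d + 1) - sinh (d + 1) ≤ 1 := by
      rw [cosh_sub_sinh]; exact exp_le_one_iff.2 (by linarith)
    have hcosh := (self_lt_sinh_iff.2 (by linarith : (0 : ℝ) < d + 1)).trans (sinh_lt_cosh _)
    rw [mulTanh, lt_div_iff₀ (cosh_pos _)]
    nlinarith
  have hcont : ContinuousOn mulTanh (Icc 0 (d + 1)) :=
    ((continuous_id.mul continuous_sinh).div continuous_cosh
      fun x => (cosh_pos x).ne').continuousOn
  obtain ⟨x, hx, rfl⟩ :=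
    intermediate_value_Ioo (by linarith) hcont ⟨by simpa [mulTanh] using hd, hb⟩
  exact ⟨x, hx.1, rfl⟩

theorem surjOn_mulCoth : SurjOn mulCoth (Ioi 0) (Ioi 1) := by
  intro d (hd : 1 < d)
  have hcosh : ∀ᶠ x in 𝓝[>] 0, cosh x < d := nhdsWithin_le_nhds <|
    (continuous_cosh.tendsto' 0 1 cosh_zero).eventually (gt_mem_nhds hd)
  obtain ⟨a, had, ha⟩ := (hcosh.and (Ioo_mem_nhdsGT one_pos)).exists
  have hsinh : ∀ x ∈ Icc a d, 0 < sinh x := fun x hx => sinh_pos_iff.2 (ha.1.trans_le hx.1)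
  -- `a < sinh a` gives `mulCoth a ≤ cosh a`
  have hlo : mulCoth a < d := by
    have := self_lt_sinh_iff.2 ha.1
    rw [mulCoth, div_lt_iff₀ (hsinh a ⟨le_rfl, by linarith [ha.2]⟩)]
    nlinarith [cosh_pos a]
  have hhi : d < mulCoth d := by
    have := sinh_lt_cosh d
    rw [mulCoth, lt_div_iff₀ (hsinh d ⟨by linarith [ha.2], le_rfl⟩)]
    nlinarith
  have hcont : ContinuousOn mulCoth (Icc a d) :=
    (continuousOn_id.mul continuous_cosh.continuousOn).div continuous_sinh.continuousOn
      fun x hx => (hsinh x hx).ne'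
  obtain ⟨x, hx, rfl⟩ := intermediate_value_Ioo (by linarith [ha.2]) hcont ⟨hlo, hhi⟩
  exact ⟨x, ha.1.trans hx.1, rfl⟩

noncomputable def halfPhase (z : ℝ) : ℝ := π * √z / 2

theorem halfPhase_pos {z : ℝ} (hz : 0 < z) : 0 < halfPhase z := by
  have := Real.sqrt_pos.2 hz
  unfold halfPhase; positivity

theorem halfPhase_lt_pi_div_two {z : ℝ} (hz : z < 1) : halfPhase z < π / 2 := by
  have : √z < 1 := (Real.sqrt_lt' one_pos).2 (by linarith)
  unfold halfPhase; nlinarith [pi_pos]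

theorem strictMonoOn_halfPhase : StrictMonoOn halfPhase (Ici 0) := fun x hx _ _ hxy => by
  have := Real.sqrt_lt_sqrt hx hxy
  unfold halfPhase; nlinarith [pi_pos]

theorem halfPhase_two_mul_div_pi_sq {x : ℝ} (hx : 0 ≤ x) : halfPhase ((2 * x / π) ^ 2) = x := by
  rw [halfPhase, Real.sqrt_sq (by positivity)]
  field_simp

theorem two_mul_div_pi_sq_lt_one {x : ℝ} (h₀ : 0 ≤ x) (h₁ : x < π / 2) :
    (2 * x / π) ^ 2 < 1 :=
  pow_lt_one₀ (by positivity) (by rw [div_lt_one pi_pos]; linarith) two_ne_zero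

theorem eta_of_pos (γ : ℝ) {z : ℝ} (hz : 0 < z) :
    eta γ z = γ * π * sin (2 * halfPhase z) / (2 * halfPhase z) + 4 * cos (2 * halfPhase z) := by
  have := Real.sqrt_pos.2 hz
  rw [eta, if_pos hz, halfPhase, mul_div_cancel₀ _ two_ne_zero]
  field_simp

theorem eta_of_neg (γ : ℝ) {z : ℝ} (hz : z < 0) :
    eta γ z = γ * π * sinh (2 * halfPhase (-z)) / (2 * halfPhase (-z)) +
      4 * cosh (2 * halfPhase (-z)) := by
  have := Real.sqrt_pos.2 (neg_pos.2 hz)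
  rw [eta, if_neg hz.not_gt, if_neg hz.ne, halfPhase, mul_div_cancel₀ _ two_ne_zero]
  field_simp

theorem four_sub_eta_of_pos (γ : ℝ) {z : ℝ} (hz : 0 < z) :
    4 - eta γ z = 8 * sin (halfPhase z) / halfPhase z *
      (halfPhase z * sin (halfPhase z) - γ * π / 8 * cos (halfPhase z)) := by
  have := (halfPhase_pos hz).ne'
  rw [eta_of_pos γ hz, sin_two_mul, cos_two_mul]
  field_simp
  linear_combination (-8 * halfPhase z) * Real.sin_sq_add_cos_sq (halfPhase z)

theorem eta_add_four_of_pos (γ : ℝ) {z : ℝ} (hz : 0 < z) :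
    eta γ z + 4 = 8 * cos (halfPhase z) / halfPhase z *
      (γ * π / 8 * sin (halfPhase z) + halfPhase z * cos (halfPhase z)) := by
  have := (halfPhase_pos hz).ne'
  rw [eta_of_pos γ hz, sin_two_mul, cos_two_mul]
  field_simp
  ring

theorem four_sub_eta_of_neg (γ : ℝ) {z : ℝ} (hz : z < 0) :
    4 - eta γ z = 8 * sinh (halfPhase (-z)) / halfPhase (-z) *
      (-(γ * π / 8 * cosh (halfPhase (-z))) - halfPhase (-z) * sinh (halfPhase (-z))) := by
  have := (halfPhase_pos (neg_pos.2 hz)).ne'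
  rw [eta_of_neg γ hz, sinh_two_mul, cosh_two_mul]
  field_simp
  linear_combination (-4 * halfPhase (-z)) * Real.cosh_sq_sub_sinh_sq (halfPhase (-z))

theorem eta_add_four_of_neg (γ : ℝ) {z : ℝ} (hz : z < 0) :
    eta γ z + 4 = 8 * cosh (halfPhase (-z)) / halfPhase (-z) *
      (γ * π / 8 * sinh (halfPhase (-z)) + halfPhase (-z) * cosh (halfPhase (-z))) := by
  have := (halfPhase_pos (neg_pos.2 hz)).ne'
  rw [eta_of_neg γ hz, sinh_two_mul, cosh_two_mul]
  field_simp
  linear_combination (-4 * halfPhase (-z)) * Real.cosh_sq_sub_sinh_sq (halfPhase (-z))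

theorem eta_le_four_iff_of_pos (γ : ℝ) {z : ℝ} (h₀ : 0 < z) (h₁ : z < 1) :
    eta γ z ≤ 4 ↔ γ * π / 8 ≤ mulTan (halfPhase z) := by
  have hx₀ := halfPhase_pos h₀
  have hx₁ := halfPhase_lt_pi_div_two h₁
  have := sin_pos_of_pos_of_lt_pi hx₀ (by linarith [pi_pos])
  rw [← sub_nonneg, four_sub_eta_of_pos γ h₀, mul_nonneg_iff_of_pos_left (by positivity),
    sub_nonneg, mulTan, tan_eq_sin_div_cos, mul_div_assoc',
    le_div_iff₀ (cos_pos_of_mem_Ioo ⟨by linarith, hx₁⟩)]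

theorem neg_four_le_eta_iff_of_pos (γ : ℝ) {z : ℝ} (h₀ : 0 < z) (h₁ : z < 1) :
    -4 ≤ eta γ z ↔ -(γ * π / 8) ≤ mulCot (halfPhase z) := by
  have hx₀ := halfPhase_pos h₀
  have hx₁ := halfPhase_lt_pi_div_two h₁
  have hsin := sin_pos_of_pos_of_lt_pi hx₀ (by linarith [pi_pos])
  have := cos_pos_of_mem_Ioo ⟨by linarith, hx₁⟩
  rw [← sub_nonneg, sub_neg_eq_add, eta_add_four_of_pos γ h₀,
    mul_nonneg_iff_of_pos_left (by positivity), mulCot, le_div_iff₀ hsin]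
  constructor <;> intro <;> linarith

theorem eta_le_four_iff_of_neg (γ : ℝ) {z : ℝ} (hz : z < 0) :
    eta γ z ≤ 4 ↔ γ * π / 8 ≤ -mulTanh (halfPhase (-z)) := by
  have hy₀ := halfPhase_pos (neg_pos.2 hz)
  have := sinh_pos_iff.2 hy₀
  rw [← sub_nonneg, four_sub_eta_of_neg γ hz, mul_nonneg_iff_of_pos_left (by positivity),
    mulTanh, le_neg, div_le_iff₀ (cosh_pos _)]
  constructor <;> intro <;> linarith

theorem neg_four_le_eta_iff_of_neg (γ : ℝ) {z : ℝ} (hz : z < 0) :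
    -4 ≤ eta γ z ↔ -(γ * π / 8) ≤ mulCoth (halfPhase (-z)) := by
  have hy₀ := halfPhase_pos (neg_pos.2 hz)
  have hsinh := sinh_pos_iff.2 hy₀
  rw [← sub_nonneg, sub_neg_eq_add, eta_add_four_of_neg γ hz,
    mul_nonneg_iff_of_pos_left (by positivity), mulCoth, le_div_iff₀ hsinh]
  constructor <;> intro <;> linarith

/- With `x = π√z/2`, `tanProfile` and `cotProfile` are `x tan x` and `x cot x`, continued to
`z ≤ 0` through `x = i y`, `y = π√(-z)/2`. -/

noncomputable def tanProfile (z : ℝ) : ℝ :=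
  if 0 ≤ z then mulTan (halfPhase z) else -mulTanh (halfPhase (-z))

noncomputable def cotProfile (z : ℝ) : ℝ :=
  if 0 < z then mulCot (halfPhase z) else if z = 0 then 1 else mulCoth (halfPhase (-z))

theorem tanProfile_zero : tanProfile 0 = 0 := by simp [tanProfile, halfPhase, mulTan]

theorem cotProfile_zero : cotProfile 0 = 1 := by simp [cotProfile]

theorem eta_le_four_iff (γ : ℝ) {z : ℝ} (hz : z < 1) :
    eta γ z ≤ 4 ↔ γ * π / 8 ≤ tanProfile z := by
  rcases lt_trichotomy z 0 with h | rfl | h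
  · rw [tanProfile, if_neg h.not_ge, eta_le_four_iff_of_neg γ h]
  · simp only [eta, tanProfile_zero, lt_irrefl, if_false, if_true]
    constructor <;> intro <;> linarith
  · rw [tanProfile, if_pos h.le, eta_le_four_iff_of_pos γ h hz]

theorem neg_four_le_eta_iff (γ : ℝ) {z : ℝ} (hz : z < 1) :
    -4 ≤ eta γ z ↔ -(γ * π / 8) ≤ cotProfile z := by
  rcases lt_trichotomy z 0 with h | rfl | h
  · rw [cotProfile, if_neg h.not_gt, if_neg h.ne, neg_four_le_eta_iff_of_neg γ h]
  · simp only [eta, cotProfile_zero, lt_irrefl, if_false, if_true]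
    constructor <;> intro <;> linarith
  · rw [cotProfile, if_pos h, neg_four_le_eta_iff_of_pos γ h hz]

theorem bandSetZero_eq (γ : ℝ) :
    bandSetZero γ = {z | z < 1 ∧ -(γ * π / 8) ≤ cotProfile z ∧ γ * π / 8 ≤ tanProfile z} := by
  ext z
  refine and_congr_right fun hz => ?_
  rw [abs_le, neg_four_le_eta_iff γ hz, eta_le_four_iff γ hz]

theorem strictMonoOn_tanProfile : StrictMonoOn tanProfile (Iio 1) := by
  refine strictMonoOn_of_inter_Iio_of_inter_Ioi (p := 0) ?_ ?_ ?_ ?_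
  · rintro x ⟨-, hx : x < 0⟩ y ⟨-, hy : y < 0⟩ hxy
    rw [tanProfile, if_neg hx.not_ge, tanProfile, if_neg hy.not_ge, neg_lt_neg_iff]
    have hx₀ := neg_pos.2 hx
    have hy₀ := neg_pos.2 hy
    exact strictMonoOn_mulTanh (halfPhase_pos hy₀).le (halfPhase_pos hx₀).le
      (strictMonoOn_halfPhase hy₀.le hx₀.le (neg_lt_neg hxy))
  · rintro x ⟨hx₁ : x < 1, hx₀ : 0 < x⟩ y ⟨hy₁ : y < 1, hy₀ : 0 < y⟩ hxy
    rw [tanProfile, if_pos hx₀.le, tanProfile, if_pos hy₀.le]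
    exact strictMonoOn_mulTan ⟨(halfPhase_pos hx₀).le, halfPhase_lt_pi_div_two hx₁⟩
      ⟨(halfPhase_pos hy₀).le, halfPhase_lt_pi_div_two hy₁⟩
      (strictMonoOn_halfPhase hx₀.le hy₀.le hxy)
  · intro x _ hx
    rw [tanProfile_zero, tanProfile, if_neg hx.not_ge, neg_lt_zero]
    exact mulTanh_pos (halfPhase_pos (neg_pos.2 hx))
  · intro x hx₁ hx₀
    rw [tanProfile_zero, tanProfile, if_pos hx₀.le]
    exact mulTan_pos (halfPhase_pos hx₀) (halfPhase_lt_pi_div_two hx₁)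

theorem strictAntiOn_cotProfile : StrictAntiOn cotProfile (Iio 1) := by
  suffices h : StrictMonoOn (fun z => -cotProfile z) (Iio 1) from
    fun x hx y hy hxy => neg_lt_neg_iff.1 (h hx hy hxy)
  refine strictMonoOn_of_inter_Iio_of_inter_Ioi (p := 0) ?_ ?_ ?_ ?_
  · rintro x ⟨-, hx : x < 0⟩ y ⟨-, hy : y < 0⟩ hxy
    rw [neg_lt_neg_iff, cotProfile, cotProfile, if_neg hx.not_gt, if_neg hx.ne,
      if_neg hy.not_gt, if_neg hy.ne]
    have hx₀ := neg_pos.2 hx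
    have hy₀ := neg_pos.2 hy
    exact strictMonoOn_mulCoth (halfPhase_pos hy₀) (halfPhase_pos hx₀)
      (strictMonoOn_halfPhase hy₀.le hx₀.le (neg_lt_neg hxy))
  · rintro x ⟨hx₁ : x < 1, hx₀ : 0 < x⟩ y ⟨hy₁ : y < 1, hy₀ : 0 < y⟩ hxy
    rw [neg_lt_neg_iff, cotProfile, cotProfile, if_pos hx₀, if_pos hy₀]
    have := pi_pos
    exact strictAntiOn_mulCot ⟨halfPhase_pos hx₀, by linarith [halfPhase_lt_pi_div_two hx₁]⟩
      ⟨halfPhase_pos hy₀, by linarith [halfPhase_lt_pi_div_two hy₁]⟩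
      (strictMonoOn_halfPhase hx₀.le hy₀.le hxy)
  · intro x _ hx
    rw [neg_lt_neg_iff, cotProfile_zero, cotProfile, if_neg hx.not_gt, if_neg hx.ne]
    exact one_lt_mulCoth (halfPhase_pos (neg_pos.2 hx))
  · intro x hx₁ hx₀
    rw [neg_lt_neg_iff, cotProfile_zero, cotProfile, if_pos hx₀]
    exact mulCot_lt_one (halfPhase_pos hx₀) (halfPhase_lt_pi_div_two hx₁)

theorem cotProfile_pos {z : ℝ} (hz : z < 1) : 0 < cotProfile z := by
  rcases lt_trichotomy z 0 with h | rfl | h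
  · rw [cotProfile, if_neg h.not_gt, if_neg h.ne]
    exact one_pos.trans (one_lt_mulCoth (halfPhase_pos (neg_pos.2 h)))
  · rw [cotProfile_zero]; exact one_pos
  · rw [cotProfile, if_pos h]
    exact mulCot_pos (halfPhase_pos h) (halfPhase_lt_pi_div_two hz)

theorem tanProfile_add_cotProfile_pos {z : ℝ} (hz : z < 1) :
    0 < tanProfile z + cotProfile z := by
  rcases lt_trichotomy z 0 with h | rfl | h
  · rw [tanProfile, if_neg h.not_ge, cotProfile, if_neg h.not_gt, if_neg h.ne]
    linarith [mulTanh_lt_mulCoth (halfPhase_pos (neg_pos.2 h))]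
  · rw [tanProfile_zero, cotProfile_zero]; norm_num
  · rw [tanProfile, if_pos h.le]
    exact add_pos (mulTan_pos (halfPhase_pos h) (halfPhase_lt_pi_div_two hz)) (cotProfile_pos hz)

theorem surjOn_tanProfile : SurjOn tanProfile (Iio 1) univ := by
  intro c _
  rcases lt_trichotomy c 0 with hc | rfl | hc
  · obtain ⟨y, hy : 0 < y, hyc⟩ := surjOn_mulTanh (neg_pos.2 hc)
    have hneg : -(2 * y / π) ^ 2 < 0 := neg_neg_of_pos (by positivity)
    refine ⟨_, hneg.trans one_pos, ?_⟩
    rw [tanProfile, if_neg hneg.not_ge, neg_neg, halfPhase_two_mul_div_pi_sq hy.le, hyc, neg_neg]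
  · exact ⟨0, by norm_num, tanProfile_zero⟩
  · obtain ⟨x, hx, rfl⟩ := surjOn_mulTan hc
    refine ⟨(2 * x / π) ^ 2, two_mul_div_pi_sq_lt_one hx.1.le hx.2, ?_⟩
    rw [tanProfile, if_pos (sq_nonneg _), halfPhase_two_mul_div_pi_sq hx.1.le]

theorem surjOn_cotProfile : SurjOn cotProfile (Iio 1) (Ioi 0) := by
  intro d (hd : 0 < d)
  rcases lt_trichotomy d 1 with h | rfl | h
  · obtain ⟨x, ⟨hx₀, hx₁⟩, rfl⟩ := surjOn_mulCot ⟨hd, h⟩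
    have hpos : 0 < (2 * x / π) ^ 2 := by have := pi_pos; positivity
    refine ⟨_, two_mul_div_pi_sq_lt_one hx₀.le hx₁, ?_⟩
    rw [cotProfile, if_pos hpos, halfPhase_two_mul_div_pi_sq hx₀.le]
  · exact ⟨0, by norm_num, cotProfile_zero⟩
  · obtain ⟨y, hy : 0 < y, rfl⟩ := surjOn_mulCoth h
    have hneg : -(2 * y / π) ^ 2 < 0 := neg_neg_of_pos (by positivity)
    refine ⟨_, hneg.trans one_pos, ?_⟩
    rw [cotProfile, if_neg hneg.not_gt, if_neg hneg.ne, neg_neg,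
      halfPhase_two_mul_div_pi_sq hy.le]

theorem lt_of_tanProfile_eq_neg_cotProfile {a b : ℝ} (ha : a < 1) (hb : b < 1)
    (h : tanProfile a = -cotProfile b) : a < b := by
  by_contra! hba
  have := strictMonoOn_tanProfile.monotoneOn hb ha hba
  linarith [tanProfile_add_cotProfile_pos hb]

theorem bandSetZero_eq_Ico {γ a : ℝ} (hγ : 0 ≤ γ) (ha : a < 1)
    (hγa : tanProfile a = γ * π / 8) : bandSetZero γ = Ico a 1 := by
  ext z
  rw [bandSetZero_eq, mem_ofPred_eq, mem_Ico, ← hγa]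
  constructor
  · rintro ⟨hz, -, hP⟩
    exact ⟨(strictMonoOn_tanProfile.le_iff_le ha hz).1 hP, hz⟩
  · rintro ⟨haz, hz⟩
    refine ⟨hz, ?_, strictMonoOn_tanProfile.monotoneOn ha hz haz⟩
    have : 0 ≤ tanProfile a := by rw [hγa]; positivity
    linarith [cotProfile_pos hz]

theorem bandSetZero_eq_Icc {γ a b : ℝ} (ha : a < 1) (hb : b < 1)
    (hγa : tanProfile a = γ * π / 8) (hγb : cotProfile b = -(γ * π / 8)) :
    bandSetZero γ = Icc a b := by
  ext z
  rw [bandSetZero_eq, mem_ofPred_eq, mem_Icc, ← hγb, ← hγa]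
  constructor
  · rintro ⟨hz, hQ, hP⟩
    exact ⟨(strictMonoOn_tanProfile.le_iff_le ha hz).1 hP,
      (strictAntiOn_cotProfile.le_iff_ge hb hz).1 hQ⟩
  · rintro ⟨haz, hzb⟩
    have hz : z < 1 := hzb.trans_lt hb
    exact ⟨hz, strictAntiOn_cotProfile.antitoneOn hz hb hzb,
      strictMonoOn_tanProfile.monotoneOn ha hz haz⟩

theorem exists_bandSetZero_eq_Icc {γ a : ℝ} (hγ : γ < 0) (ha : a < 1)
    (hγa : tanProfile a = γ * π / 8) :
    ∃ b < 1, cotProfile b = -(γ * π / 8) ∧ a < b ∧ bandSetZero γ = Icc a b := by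
  obtain ⟨b, hb, hγb⟩ := surjOn_cotProfile (show 0 < -(γ * π / 8) by nlinarith [pi_pos])
  exact ⟨b, hb, hγb, lt_of_tanProfile_eq_neg_cotProfile ha hb (by rw [hγa, hγb, neg_neg]),
    bandSetZero_eq_Icc ha hb hγa hγb⟩

theorem zero_mem_bandSetZero_iff (γ : ℝ) : 0 ∈ bandSetZero γ ↔ -8 / π ≤ γ ∧ γ ≤ 0 := by
  have := pi_pos
  rw [bandSetZero_eq, mem_ofPred_eq, cotProfile_zero, tanProfile_zero, div_le_iff₀ this]
  constructor
  · rintro ⟨-, h₁, h₂⟩; constructor <;> nlinarith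
  · rintro ⟨h₁, h₂⟩; exact ⟨by norm_num, by linarith, by nlinarith⟩

end BandSet

open BandSet

/-- Structure of `I₀ = {z < 1 : |η(z)| ≤ 4}` depending on `γ`: for `γ > 0`,
`I₀ = [a₀, 1)` with `0 < a₀ < 1`; for `γ = 0`, `I₀ = [0, 1)`; for `−8/π < γ < 0`,
`I₀ = [a₀, b₀]` with `a₀ < 0 < b₀ < 1`; for `γ = −8/π`, `I₀ = [a₀, 0]` with `a₀ < 0`; for
`γ < −8/π`, `I₀ = [a₀, b₀]` with `a₀ < b₀ < 0`. In particular `0 ∈ I₀ ↔ −8/π ≤ γ ≤ 0`. -/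
theorem bandSetZero_structure (γ : ℝ) :
    (0 < γ → ∃ a : ℝ, 0 < a ∧ a < 1 ∧ bandSetZero γ = Set.Ico a 1) ∧
    (γ = 0 → bandSetZero γ = Set.Ico 0 1) ∧
    (-8 / π < γ ∧ γ < 0 → ∃ a b : ℝ, a < 0 ∧ 0 < b ∧ b < 1 ∧
      bandSetZero γ = Set.Icc a b) ∧
    (γ = -8 / π → ∃ a : ℝ, a < 0 ∧ bandSetZero γ = Set.Icc a 0) ∧
    (γ < -8 / π → ∃ a b : ℝ, a < b ∧ b < 0 ∧ bandSetZero γ = Set.Icc a b) ∧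
    ((0 : ℝ) ∈ bandSetZero γ ↔ -8 / π ≤ γ ∧ γ ≤ 0) := by
  have hπ := pi_pos
  have h0 : (0 : ℝ) ∈ Iio 1 := by norm_num
  have hneg : -8 / π < 0 := div_neg_of_neg_of_pos (by norm_num) hπ
  obtain ⟨a, ha, hγa⟩ := surjOn_tanProfile (mem_univ (γ * π / 8))
  refine ⟨fun hγ => ?_, fun hγ => ?_, fun ⟨hγ₁, hγ₂⟩ => ?_, fun hγ => ?_, fun hγ => ?_,
    zero_mem_bandSetZero_iff γ⟩
  · refine ⟨a, (strictMonoOn_tanProfile.lt_iff_lt h0 ha).1 ?_, ha, bandSetZero_eq_Ico hγ.le ha hγa⟩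
    rw [tanProfile_zero, hγa]; positivity
  · obtain rfl : a = 0 :=
      strictMonoOn_tanProfile.injOn ha h0 (by rw [hγa, tanProfile_zero, hγ]; ring)
    exact bandSetZero_eq_Ico hγ.ge ha hγa
  · obtain ⟨b, hb, hγb, -, hI⟩ := exists_bandSetZero_eq_Icc hγ₂ ha hγa
    have := (div_lt_iff₀ hπ).1 hγ₁
    refine ⟨a, b, (strictMonoOn_tanProfile.lt_iff_lt ha h0).1 ?_,
      (strictAntiOn_cotProfile.lt_iff_gt hb h0).1 ?_, hb, hI⟩
    · rw [tanProfile_zero, hγa]; nlinarith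
    · rw [hγb, cotProfile_zero]; linarith
  · obtain ⟨b, hb, hγb, hab, hI⟩ := exists_bandSetZero_eq_Icc (hγ.trans_lt hneg) ha hγa
    obtain rfl : b = 0 := strictAntiOn_cotProfile.injOn hb h0
      (by rw [hγb, cotProfile_zero, hγ]; field_simp)
    exact ⟨a, hab, hI⟩
  · obtain ⟨b, hb, hγb, hab, hI⟩ := exists_bandSetZero_eq_Icc (hγ.trans hneg) ha hγa
    have := (lt_div_iff₀ hπ).1 hγ
    refine ⟨a, b, hab, (strictAntiOn_cotProfile.lt_iff_gt h0 hb).1 ?_, hI⟩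
    rw [hγb, cotProfile_zero]; linarith
end

section
/- Let γ ≠ 0 and let n ≥ 1 be an integer. On the set I_n = {z ∈ (n², (n+1)²) : |η(z)| ≤ 4}, the function η is strictly monotone; in particular, η restricted to I_n is injective and is a homeomorphism from I_n onto its image η(I_n) ⊆ [−4, 4]. -/
open Real

/-!
On `(n², (n+1)²)` write `z = s²` with `n < s < n + 1`, so that `η = γ sin(πs)/s + 4 cos(πs)`
and `sin(πs)` has the constant sign `(-1)ⁿ`. Wherever `|η| ≤ 4`, an algebraic identity in
`sin(πs)`, `cos(πs)` and `η`, together with `πs > 1`, gives `sin(πs) · dη/ds < 0`. So `η` is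
strictly monotone at every point where it lies in `[-4, 4]`; it therefore cannot return to a
level of that band once it has left it, which makes the band set an interval on which `η` is
strictly monotone, and a continuous strictly monotone map of an interval is a homeomorphism onto
its image.
-/

open Set Filter Topology

section Band

variable {f f' : ℝ → ℝ} {e x p q v a b c d : ℝ}

lemma HasDerivAt.eventually_nhdsGT_lt (hf : HasDerivAt f e x) (he : e < 0) :
    ∀ᶠ t in 𝓝[>] x, f t < f x := by
  have hslope := (hasDerivAt_iff_tendsto_slope.1 hf).mono_left
    (nhdsWithin_mono x fun t (ht : x < t) => ht.ne')
  filter_upwards [hslope.eventually_lt_const he, self_mem_nhdsWithin] with t hneg hxt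
  exact (slope_neg_iff_of_le (le_of_lt hxt)).1 hneg

lemma HasDerivAt.eventually_nhdsLT_gt (hf : HasDerivAt f e x) (he : e < 0) :
    ∀ᶠ t in 𝓝[<] x, f x < f t := by
  have hslope := (hasDerivAt_iff_tendsto_slope.1 hf).mono_left
    (nhdsWithin_mono x fun t (ht : t < x) => ht.ne)
  filter_upwards [hslope.eventually_lt_const he, self_mem_nhdsWithin] with t hneg htx
  rw [slope_comm] at hneg
  exact (slope_neg_iff_of_le (le_of_lt htx)).1 hneg

/-- Look at the first time `w` at which `f` reaches `v`: `f < v` on `[p, w)`, so `f` cannot be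
decreasing at `w`. -/
lemma lt_of_lt_of_hasDerivAt_neg_at_level (hpq : p ≤ q)
    (hf : ∀ z ∈ Icc p q, HasDerivAt f (f' z) z)
    (hlevel : ∀ z ∈ Icc p q, f z = v → f' z < 0)
    (hp : f p < v) : f q < v := by
  by_contra! hq
  have hcont : ContinuousOn f (Icc p q) := fun z hz => (hf z hz).continuousAt.continuousWithinAt
  set T := Icc p q ∩ f ⁻¹' {v}
  have hTbdd : BddBelow T := ⟨p, fun t ht => ht.1.1⟩
  obtain ⟨w₀, hw₀, hfw₀⟩ := intermediate_value_Icc hpq hcont ⟨hp.le, hq⟩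
  have hwT : sInf T ∈ T :=
    (hcont.preimage_isClosed_of_isClosed isClosed_Icc isClosed_singleton).csInf_mem
      ⟨w₀, hw₀, hfw₀⟩ hTbdd
  set w := sInf T
  have hfw : f w = v := hwT.2
  have hbelow : ∀ t ∈ Ico p w, f t < v := by
    intro t ht
    by_contra! hvt
    obtain ⟨u, hu, hfu⟩ := intermediate_value_Icc ht.1
      (hcont.mono (Icc_subset_Icc_right (ht.2.le.trans hwT.1.2))) ⟨hp.le, hvt⟩
    have hwu : w ≤ u := csInf_le hTbdd ⟨⟨hu.1, hu.2.trans (ht.2.le.trans hwT.1.2)⟩, hfu⟩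
    linarith [hu.2, ht.2]
  have hpw : p < w := hwT.1.1.lt_of_ne fun h => hp.ne (h ▸ hfw)
  obtain ⟨t, hft, ht⟩ := (((hf w hwT.1).eventually_nhdsLT_gt (hlevel w hwT.1 hfw)).and
    (Ico_mem_nhdsLT hpw)).exists
  linarith [hbelow t ht]

lemma lt_of_le_of_hasDerivAt_neg_at_level (hpq : p < q)
    (hf : ∀ z ∈ Icc p q, HasDerivAt f (f' z) z)
    (hlevel : ∀ z ∈ Icc p q, f z = v → f' z < 0)
    (hp : f p ≤ v) : f q < v := by
  rcases hp.lt_or_eq with hp | hp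
  · exact lt_of_lt_of_hasDerivAt_neg_at_level hpq.le hf hlevel hp
  obtain ⟨p', hfp', hp'⟩ := (((hf p (left_mem_Icc.2 hpq.le)).eventually_nhdsGT_lt
    (hlevel p (left_mem_Icc.2 hpq.le) hp)).and (Ioo_mem_nhdsGT hpq)).exists
  have hsub : Icc p' q ⊆ Icc p q := Icc_subset_Icc_left hp'.1.le
  exact lt_of_lt_of_hasDerivAt_neg_at_level hp'.2.le (fun z hz => hf z (hsub hz))
    (fun z hz => hlevel z (hsub hz)) (hp ▸ hfp')

lemma strictAntiOn_of_hasDerivAt_neg_on_band (hf : ∀ z ∈ Ioo a b, HasDerivAt f (f' z) z)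
    (hneg : ∀ z ∈ Ioo a b, f z ∈ Icc c d → f' z < 0) :
    StrictAntiOn f (Ioo a b ∩ f ⁻¹' Icc c d) := by
  intro x hx y hy hxy
  have hsub : Icc x y ⊆ Ioo a b := ordConnected_Ioo.out hx.1 hy.1
  exact lt_of_le_of_hasDerivAt_neg_at_level hxy (fun z hz => hf z (hsub hz))
    (fun z hz hfz => hneg z (hsub hz) (hfz ▸ hx.2)) le_rfl

lemma ordConnected_of_hasDerivAt_neg_on_band (hf : ∀ z ∈ Ioo a b, HasDerivAt f (f' z) z)
    (hneg : ∀ z ∈ Ioo a b, f z ∈ Icc c d → f' z < 0) :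
    (Ioo a b ∩ f ⁻¹' Icc c d).OrdConnected := by
  refine ⟨fun x hx y hy z hz => ?_⟩
  have hxy : Icc x y ⊆ Ioo a b := ordConnected_Ioo.out hx.1 hy.1
  have hxz : Icc x z ⊆ Ioo a b := (Icc_subset_Icc_right hz.2).trans hxy
  have hzy : Icc z y ⊆ Ioo a b := (Icc_subset_Icc_left hz.1).trans hxy
  have hcd : c ≤ d := hx.2.1.trans hx.2.2
  refine ⟨hzy (left_mem_Icc.2 hz.2), ?_, ?_⟩
  · by_contra! hzc
    have := lt_of_lt_of_hasDerivAt_neg_at_level hz.2 (fun w hw => hf w (hzy hw))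
      (fun w hw hfw => hneg w (hzy hw) (hfw ▸ ⟨le_rfl, hcd⟩)) hzc
    exact this.not_ge hy.2.1
  · by_contra! hdz
    have hxz' : x < z := hz.1.lt_of_ne (by rintro rfl; exact hx.2.2.not_gt hdz)
    have := lt_of_le_of_hasDerivAt_neg_at_level hxz' (fun w hw => hf w (hxz hw))
      (fun w hw hfw => hneg w (hxz hw) (hfw ▸ ⟨hcd, le_rfl⟩)) hx.2.2
    exact this.not_gt hdz

lemma neg_preimage_Icc_neg (f : ℝ → ℝ) (c d : ℝ) :
    (-f) ⁻¹' Icc (-d) (-c) = f ⁻¹' Icc c d := by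
  ext
  simp [and_comm]

lemma strictMonoOn_of_hasDerivAt_pos_on_band (hf : ∀ z ∈ Ioo a b, HasDerivAt f (f' z) z)
    (hpos : ∀ z ∈ Ioo a b, f z ∈ Icc c d → 0 < f' z) :
    StrictMonoOn f (Ioo a b ∩ f ⁻¹' Icc c d) := by
  have := strictAntiOn_of_hasDerivAt_neg_on_band (f := -f) (f' := -f') (c := -d) (d := -c)
    (fun z hz => (hf z hz).neg) fun z hz hfz => neg_neg_of_pos <| hpos z hz <| by
      rw [← mem_preimage, ← neg_preimage_Icc_neg]; exact hfz
  rw [neg_preimage_Icc_neg] at this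
  simpa using this.neg

lemma ordConnected_of_hasDerivAt_pos_on_band (hf : ∀ z ∈ Ioo a b, HasDerivAt f (f' z) z)
    (hpos : ∀ z ∈ Ioo a b, f z ∈ Icc c d → 0 < f' z) :
    (Ioo a b ∩ f ⁻¹' Icc c d).OrdConnected := by
  have := ordConnected_of_hasDerivAt_neg_on_band (f := -f) (f' := -f') (c := -d) (d := -c)
    (fun z hz => (hf z hz).neg) fun z hz hfz => neg_neg_of_pos <| hpos z hz <| by
      rw [← mem_preimage, ← neg_preimage_Icc_neg]; exact hfz
  rwa [neg_preimage_Icc_neg] at this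

end Band

section Homeomorph

variable {S : Set ℝ} {f : ℝ → ℝ}

lemma StrictMonoOn.exists_homeomorph_image (hf : StrictMonoOn f S) (hcont : ContinuousOn f S)
    (hS : S.OrdConnected) : ∃ e : S ≃ₜ (f '' S : Set ℝ), ∀ x : S, (e x : ℝ) = f x := by
  have := hS
  have : (f '' S).OrdConnected := (hS.isPreconnected.image f hcont).ordConnected
  exact ⟨(hf.orderIso f S).toHomeomorph, fun _ => rfl⟩

lemma StrictAntiOn.exists_homeomorph_image (hf : StrictAntiOn f S) (hcont : ContinuousOn f S)
    (hS : S.OrdConnected) : ∃ e : S ≃ₜ (f '' S : Set ℝ), ∀ x : S, (e x : ℝ) = f x := by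
  obtain ⟨e, he⟩ := hf.neg.exists_homeomorph_image hcont.neg hS
  have himage : Neg.neg '' ((fun z => -f z) '' S) = f '' S := by
    rw [image_image]
    simp
  exact ⟨(e.trans ((Homeomorph.neg ℝ).image _)).trans (Homeomorph.setCongr himage),
    fun x => show -(e x : ℝ) = f x by rw [he, neg_neg]⟩

end Homeomorph

section Eta

/-- `η(s²)` for `s > 0`. -/
noncomputable def etaAtSq (γ s : ℝ) : ℝ := γ * sin (π * s) / s + 4 * cos (π * s)

noncomputable def etaAtSqDeriv (γ s : ℝ) : ℝ :=
  γ * (π * s * cos (π * s) - sin (π * s)) / s ^ 2 - 4 * π * sin (π * s)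

lemma hasDerivAt_etaAtSq (γ : ℝ) {s : ℝ} (hs : s ≠ 0) :
    HasDerivAt (etaAtSq γ) (etaAtSqDeriv γ s) s := by
  have hlin : HasDerivAt (fun t => π * t) π s := by simpa using (hasDerivAt_id s).const_mul π
  refine (((hlin.sin).const_mul γ).div (hasDerivAt_id' s) hs).add
    ((hlin.cos).const_mul 4) |>.congr_deriv ?_
  rw [etaAtSqDeriv]
  field_simp
  ring

lemma eta_of_pos_s19 (γ : ℝ) {z : ℝ} (hz : 0 < z) : eta γ z = etaAtSq γ (√z) := by
  rw [eta, if_pos hz, etaAtSq]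

lemma eta_eventuallyEq_etaAtSq_sqrt (γ : ℝ) {z : ℝ} (hz : 0 < z) :
    eta γ =ᶠ[𝓝 z] fun t => etaAtSq γ (√t) :=
  eventually_of_mem (Ioi_mem_nhds hz) fun _ => eta_of_pos_s19 γ

lemma hasDerivAt_eta (γ : ℝ) {z : ℝ} (hz : 0 < z) :
    HasDerivAt (eta γ) (etaAtSqDeriv γ (√z) * (1 / (2 * √z))) z :=
  ((hasDerivAt_etaAtSq γ (sqrt_pos.2 hz).ne').comp z
    (hasDerivAt_sqrt hz.ne')).congr_of_eventuallyEq (eta_eventuallyEq_etaAtSq_sqrt γ hz)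

/-- By `(4 - BE)² - (A(4B - E))² = (16 - E²)A² + B²(E - 4B)²`, `|A(4B - E)| ≤ 4 - BE`. -/
lemma mul_four_mul_sub_lt {A B E k : ℝ} (hAB : A ^ 2 + B ^ 2 = 1) (hA : A ≠ 0)
    (hE : |E| ≤ 4) (hk : 1 < k) : A * (4 * B - E) < k * (4 - B * E) := by
  obtain ⟨hE₁, hE₂⟩ := abs_le.1 hE
  have hB : B ^ 2 < 1 := by have := pow_pos (abs_pos.2 hA) 2; rw [sq_abs] at this; linarith
  have hBE : 0 < 4 - B * E := by nlinarith [sq_nonneg (B * E), sq_nonneg (4 * B - E)]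
  have hsq : (A * (4 * B - E)) ^ 2 ≤ (4 - B * E) ^ 2 := by
    nlinarith [mul_nonneg (sq_nonneg A) (by nlinarith : (0:ℝ) ≤ 16 - E ^ 2),
      mul_nonneg (sq_nonneg B) (sq_nonneg (E - 4 * B))]
  calc A * (4 * B - E) ≤ 4 - B * E := abs_le_of_sq_le_sq' hsq hBE.le |>.2
    _ < k * (4 - B * E) := lt_mul_left hBE hk

lemma sin_mul_etaAtSqDeriv_neg (γ : ℝ) {s : ℝ} (hs : 1 < π * s) (hsin : sin (π * s) ≠ 0)
    (hband : |etaAtSq γ s| ≤ 4) : sin (π * s) * etaAtSqDeriv γ s < 0 := by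
  have hs0 : 0 < s := pos_of_mul_pos_right (one_pos.trans hs) pi_pos.le
  have key := mul_four_mul_sub_lt (sin_sq_add_cos_sq (π * s)) hsin hband hs
  have hid : sin (π * s) * etaAtSqDeriv γ s * s =
      -(π * s * (4 - cos (π * s) * etaAtSq γ s)
        - sin (π * s) * (4 * cos (π * s) - etaAtSq γ s)) := by
    simp only [etaAtSq, etaAtSqDeriv]
    field_simp
    linear_combination (-4 * π * s ^ 2) * sin_sq_add_cos_sq (π * s)
  exact neg_of_mul_neg_left (by rw [hid]; linarith) hs0.le

lemma neg_one_pow_mul_sin_pos (n : ℕ) {s : ℝ} (h₁ : n < s) (h₂ : s < n + 1) :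
    0 < (-1) ^ n * sin (π * s) := by
  have hsin : 0 < sin (π * (s - n)) :=
    sin_pos_of_pos_of_lt_pi (mul_pos pi_pos (by linarith)) (by nlinarith [pi_pos])
  rw [show π * s = π * (s - n) + n * π by ring, sin_add_nat_mul_pi, ← mul_assoc, ← pow_add,
    ← two_mul, pow_mul]
  simpa using hsin

lemma bandSet_eq (γ : ℝ) (n : ℕ) :
    bandSet γ n = Ioo ((n : ℝ) ^ 2) (((n : ℝ) + 1) ^ 2) ∩ eta γ ⁻¹' Icc (-4) 4 := by
  ext z
  simp [bandSet, abs_le]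

lemma neg_one_pow_mul_deriv_eta_neg (γ : ℝ) {n : ℕ} (hn : 1 ≤ n) {z : ℝ}
    (hz : z ∈ Ioo ((n : ℝ) ^ 2) (((n : ℝ) + 1) ^ 2)) (hband : eta γ z ∈ Icc (-4) 4) :
    (-1) ^ n * (etaAtSqDeriv γ (√z) * (1 / (2 * √z))) < 0 := by
  have hn' : (1 : ℝ) ≤ n := by exact_mod_cast hn
  have hz0 : 0 < z := by nlinarith [hz.1]
  have hs₁ : (n : ℝ) < √z := (lt_sqrt (by positivity)).2 hz.1
  have hs₂ : √z < n + 1 := (sqrt_lt' (by positivity)).2 hz.2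
  have hsign := neg_one_pow_mul_sin_pos n hs₁ hs₂
  have hderiv := sin_mul_etaAtSqDeriv_neg γ (s := √z) (by nlinarith [pi_gt_three])
    (by rintro h; rw [h, mul_zero] at hsign; exact hsign.false)
    (eta_of_pos_s19 γ hz0 ▸ abs_le.2 hband)
  have hprod : (-1) ^ n * etaAtSqDeriv γ (√z) * sin (π * √z) ^ 2 < 0 := by
    linarith [mul_neg_of_pos_of_neg hsign hderiv]
  rw [← mul_assoc]
  exact mul_neg_of_neg_of_pos (neg_of_mul_neg_left hprod (sq_nonneg _)) (by positivity)

end Eta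

theorem eta_strictly_monotone_on_bandSet_general (γ : ℝ) (n : ℕ) (hn : 1 ≤ n) :
    (StrictMonoOn (eta γ) (bandSet γ n) ∨ StrictAntiOn (eta γ) (bandSet γ n)) ∧
    Set.InjOn (eta γ) (bandSet γ n) ∧
    eta γ '' bandSet γ n ⊆ Set.Icc (-4 : ℝ) 4 ∧
    ∃ e : bandSet γ n ≃ₜ (eta γ '' bandSet γ n : Set ℝ),
      ∀ x : bandSet γ n, (e x : ℝ) = eta γ (x : ℝ) := by
  have hderiv : ∀ z ∈ Ioo ((n : ℝ) ^ 2) (((n : ℝ) + 1) ^ 2),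
      HasDerivAt (eta γ) (etaAtSqDeriv γ (√z) * (1 / (2 * √z))) z :=
    fun z hz => hasDerivAt_eta γ ((sq_nonneg _).trans_lt hz.1)
  have hsign := fun z hz => neg_one_pow_mul_deriv_eta_neg γ hn (z := z) hz
  have hcont : ContinuousOn (eta γ) (bandSet γ n) :=
    fun z hz => (hderiv z hz.1).continuousAt.continuousWithinAt
  have himage : eta γ '' bandSet γ n ⊆ Icc (-4) 4 := by
    rw [bandSet_eq]
    exact image_subset_iff.2 inter_subset_right
  rcases n.even_or_odd with hn' | hn'
  · simp only [hn'.neg_one_pow, one_mul] at hsign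
    have hanti := strictAntiOn_of_hasDerivAt_neg_on_band hderiv hsign
    have hconn := ordConnected_of_hasDerivAt_neg_on_band hderiv hsign
    rw [← bandSet_eq] at hanti hconn
    exact ⟨.inr hanti, hanti.injOn, himage, hanti.exists_homeomorph_image hcont hconn⟩
  · simp only [hn'.neg_one_pow, neg_one_mul, neg_lt_zero] at hsign
    have hmono := strictMonoOn_of_hasDerivAt_pos_on_band hderiv hsign
    have hconn := ordConnected_of_hasDerivAt_pos_on_band hderiv hsign
    rw [← bandSet_eq] at hmono hconn
    exact ⟨.inl hmono, hmono.injOn, himage, hmono.exists_homeomorph_image hcont hconn⟩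

/-- For `γ ≠ 0` and `n ≥ 1`, `η` is strictly monotone on
`I_n = {z ∈ (n², (n+1)²) : |η(z)| ≤ 4}`; in particular it is injective on `I_n` and a
homeomorphism from `I_n` onto its image `η(I_n) ⊆ [−4, 4]`. -/
theorem eta_strictly_monotone_on_bandSet (γ : ℝ) (hγ : γ ≠ 0) (n : ℕ) (hn : 1 ≤ n) :
    (StrictMonoOn (eta γ) (bandSet γ n) ∨ StrictAntiOn (eta γ) (bandSet γ n)) ∧
    Set.InjOn (eta γ) (bandSet γ n) ∧
    eta γ '' bandSet γ n ⊆ Set.Icc (-4 : ℝ) 4 ∧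
    ∃ e : bandSet γ n ≃ₜ (eta γ '' bandSet γ n : Set ℝ),
      ∀ x : bandSet γ n, (e x : ℝ) = eta γ (x : ℝ) :=
  eta_strictly_monotone_on_bandSet_general γ n hn
end
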